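/- arXiv:math/0412394 — 3 statements merged into one kernel-verified Lean document; each statement's English description precedes it below -/
import Mathlib

section
/- If {φ_n, φ̄_n} is a bi-orthogonal polynomial system for w, then for every n ≥ 1, as identities between polynomials in z: κ_n·φ_n(0)·φ_{n+1}(z) + κ_{n−1}·φ_{n+1}(0)·z·φ_{n−1}(z) = [κ_n·φ_{n+1}(0) + κ_{n+1}·φ_n(0)·z]·φ_n(z), and κ_n·φ̄_n(0)·φ*_{n+1}(z) + κ_{n−1}·φ̄_{n+1}(0)·z·φ*_{n−1}(z) = [κ_n·φ̄_{n+1}(0)·z + κ_{n+1}·φ̄_n(0)]·φ*_n(z). -/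
open Complex Polynomial Finset
open scoped Real

/-- Trigonometric moment `v_k = (1/2πi) ∮_𝕋 v(ζ) ζ^{-k} dζ/ζ`. -/
noncomputable def tmom (v : ℂ → ℂ) (k : ℤ) : ℂ :=
  (1 / (2 * Real.pi * Complex.I)) * ∮ ζ in C(0, 1), v ζ * ζ ^ (-k) / ζ

/-- Toeplitz determinant `I^ε_n[v] = det [v_{-ε+j-k}]_{0 ≤ j,k ≤ n-1}` (equal to `1` for `n = 0`). -/
noncomputable def toepDet (v : ℂ → ℂ) (ε : ℤ) (n : ℕ) : ℂ :=
  Matrix.det (Matrix.of fun j k : Fin n => tmom v (-ε + (j.1 : ℤ) - (k.1 : ℤ)))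

/-- A bi-orthogonal polynomial system on the unit circle for the weight `w`. -/
structure BiOrthoSystem (w : ℂ → ℂ) : Type where
  φ : ℕ → Polynomial ℂ
  φb : ℕ → Polynomial ℂ
  deg_φ : ∀ n, (φ n).degree = n
  deg_φb : ∀ n, (φb n).degree = n
  lead_eq : ∀ n, (φ n).leadingCoeff = (φb n).leadingCoeff
  lead_ne : ∀ n, (φ n).leadingCoeff ≠ 0
  ortho : ∀ m n : ℕ,
    (1 / (2 * Real.pi * Complex.I)) *
      (∮ ζ in C(0, 1), w ζ * (φ m).eval ζ * (φb n).eval ζ⁻¹ / ζ)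
    = if m = n then 1 else 0

namespace BiOrthoSystem

variable {w : ℂ → ℂ} (S : BiOrthoSystem w)

/-- The common leading coefficient `κ_n`. -/
noncomputable def κ (n : ℕ) : ℂ := (S.φ n).leadingCoeff

/-- The reciprocal polynomial `φ*_n(z) = z^n φ̄_n(1/z)` (coefficients of `φ̄_n` reversed). -/
noncomputable def φs (n : ℕ) : Polynomial ℂ := (S.φb n).reverse

/-- The associated function `ε_n(z)`. -/
noncomputable def ε (n : ℕ) (z : ℂ) : ℂ :=
  (1 / (2 * Real.pi * Complex.I)) *
    ∮ ζ in C(0, 1), (ζ + z) / (ζ - z) * w ζ * (S.φ n).eval ζ / ζ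

/-- The associated function `ε*_n(z)`. -/
noncomputable def εs (n : ℕ) (z : ℂ) : ℂ :=
  -z ^ n * ((1 / (2 * Real.pi * Complex.I)) *
    ∮ ζ in C(0, 1), (ζ + z) / (ζ - z) * w ζ * (S.φb n).eval ζ⁻¹ / ζ)

end BiOrthoSystem

namespace TTRAux

noncomputable def Bf (w : ℂ → ℂ) (p q : Polynomial ℂ) : ℂ :=
  (1 / (2 * Real.pi * Complex.I)) *
    ∮ ζ in C(0, 1), w ζ * p.eval ζ * q.eval ζ⁻¹ / ζ

lemma circleIntegral_add {f g : ℂ → ℂ} (hf : CircleIntegrable f 0 1)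
    (hg : CircleIntegrable g 0 1) :
    (∮ z in C(0, 1), (f z + g z)) = (∮ z in C(0, 1), f z) + ∮ z in C(0, 1), g z := by
  simp only [circleIntegral, smul_add, intervalIntegral.integral_add hf.out hg.out]

variable {w : ℂ → ℂ} (hW : ContinuousOn w (Metric.sphere (0:ℂ) 1))

lemma sphere_ne_zero {ζ : ℂ} (hζ : ζ ∈ Metric.sphere (0:ℂ) 1) : ζ ≠ 0 :=
  Metric.ne_of_mem_sphere hζ one_ne_zero

include hW in
lemma Bf_integrable (p q : Polynomial ℂ) :
    CircleIntegrable (fun ζ => w ζ * p.eval ζ * q.eval ζ⁻¹ / ζ) 0 1 := by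
  apply ContinuousOn.circleIntegrable zero_le_one
  have h1 : ContinuousOn (fun ζ : ℂ => q.eval ζ⁻¹) (Metric.sphere (0:ℂ) 1) :=
    q.continuous.comp_continuousOn (ContinuousOn.inv₀ continuousOn_id
      fun ζ hζ => sphere_ne_zero hζ)
  exact (((hW.mul (p.continuous.continuousOn)).mul h1).div continuousOn_id
    fun ζ hζ => sphere_ne_zero hζ)

include hW in
lemma Bf_add_right (p q r : Polynomial ℂ) :
    Bf w p (q + r) = Bf w p q + Bf w p r := by
  unfold Bf
  rw [← mul_add, ← circleIntegral_add (Bf_integrable hW p q) (Bf_integrable hW p r)]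
  congr 1
  refine circleIntegral.integral_congr zero_le_one fun ζ _ => ?_
  simp only [eval_add]
  ring

include hW in
lemma Bf_add_left (p r q : Polynomial ℂ) :
    Bf w (p + r) q = Bf w p q + Bf w r q := by
  unfold Bf
  rw [← mul_add, ← circleIntegral_add (Bf_integrable hW p q) (Bf_integrable hW r q)]
  congr 1
  refine circleIntegral.integral_congr zero_le_one fun ζ _ => ?_
  simp only [eval_add]
  ring

lemma Bf_smul_right (c : ℂ) (p q : Polynomial ℂ) :
    Bf w p (C c * q) = c * Bf w p q := by
  unfold Bf
  have : (∮ ζ in C(0, 1), w ζ * p.eval ζ * (C c * q).eval ζ⁻¹ / ζ)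
      = ∮ ζ in C(0, 1), c • (w ζ * p.eval ζ * q.eval ζ⁻¹ / ζ) := by
    refine circleIntegral.integral_congr zero_le_one fun ζ _ => ?_
    simp only [eval_mul, eval_C, smul_eq_mul]
    ring
  rw [this, circleIntegral.integral_smul]
  simp only [smul_eq_mul]
  ring

lemma Bf_smul_left (c : ℂ) (p q : Polynomial ℂ) :
    Bf w (C c * p) q = c * Bf w p q := by
  unfold Bf
  have : (∮ ζ in C(0, 1), w ζ * (C c * p).eval ζ * q.eval ζ⁻¹ / ζ)
      = ∮ ζ in C(0, 1), c • (w ζ * p.eval ζ * q.eval ζ⁻¹ / ζ) := by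
    refine circleIntegral.integral_congr zero_le_one fun ζ _ => ?_
    simp only [eval_mul, eval_C, smul_eq_mul]
    ring
  rw [this, circleIntegral.integral_smul]
  simp only [smul_eq_mul]
  ring

lemma Bf_zero_right (p : Polynomial ℂ) : Bf w p 0 = 0 := by
  have := Bf_smul_right (w := w) 0 p 0
  simpa using this

lemma Bf_zero_left (q : Polynomial ℂ) : Bf w 0 q = 0 := by
  have := Bf_smul_left (w := w) 0 0 q
  simpa using this

include hW in
lemma Bf_sub_left (p r q : Polynomial ℂ) :
    Bf w (p - r) q = Bf w p q - Bf w r q := by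
  have h : p - r + r = p := by ring
  have := Bf_add_left hW (p - r) r q
  rw [h] at this
  linear_combination -this


include hW in
lemma Bf_sum_left {ι : Type*} (s : Finset ι) (f : ι → Polynomial ℂ) (q : Polynomial ℂ) :
    Bf w (∑ k ∈ s, f k) q = ∑ k ∈ s, Bf w (f k) q := by
  classical
  induction s using Finset.induction_on with
  | empty => simpa using Bf_zero_left (w := w) q
  | insert _ _ hx ih =>
      rw [Finset.sum_insert hx, Finset.sum_insert hx, Bf_add_left hW, ih]

include hW in
lemma Bf_sum_right {ι : Type*} (s : Finset ι) (p : Polynomial ℂ) (f : ι → Polynomial ℂ) :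
    Bf w p (∑ k ∈ s, f k) = ∑ k ∈ s, Bf w p (f k) := by
  classical
  induction s using Finset.induction_on with
  | empty => simpa using Bf_zero_right (w := w) p
  | insert _ _ hx ih =>
      rw [Finset.sum_insert hx, Finset.sum_insert hx, Bf_add_right hW, ih]

lemma Bf_X_mul (p q : Polynomial ℂ) : Bf w (X * p) (X * q) = Bf w p q := by
  unfold Bf
  congr 1
  refine circleIntegral.integral_congr zero_le_one fun ζ hζ => ?_
  have hζ0 : ζ ≠ 0 := sphere_ne_zero hζ
  simp only [eval_mul, eval_X]
  field_simp

lemma eval_reverse_of_ne_zero (q : Polynomial ℂ) {z : ℂ} (hz : z ≠ 0) :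
    q.reverse.eval z = z ^ q.natDegree * q.eval z⁻¹ := by
  have hzi : z⁻¹ ≠ 0 := inv_ne_zero hz
  have : Invertible (z⁻¹) := invertibleOfNonzero hzi
  have h := Polynomial.eval₂_reverse_mul_pow (RingHom.id ℂ) (z⁻¹) q
  rw [invOf_eq_inv, inv_inv] at h
  have h2 : q.reverse.eval z * (z⁻¹) ^ q.natDegree = q.eval z⁻¹ := by
    exact h
  rw [← h2, inv_pow, mul_left_comm, mul_inv_cancel₀ (pow_ne_zero _ hz), mul_one]

lemma Bf_reverse (q : Polynomial ℂ) (j : ℕ) (hj : j ≤ q.natDegree) :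
    Bf w q.reverse (X ^ j) = Bf w (X ^ (q.natDegree - j)) q := by
  unfold Bf
  congr 1
  refine circleIntegral.integral_congr zero_le_one fun ζ hζ => ?_
  have hζ0 : ζ ≠ 0 := sphere_ne_zero hζ
  rw [eval_reverse_of_ne_zero q hζ0]
  simp only [eval_pow, eval_X]
  have hpow : ζ ^ q.natDegree = ζ ^ (q.natDegree - j) * ζ ^ j := by
    rw [← pow_add, Nat.sub_add_cancel hj]
  rw [hpow]
  have hinv : ζ ^ j * ζ⁻¹ ^ j = 1 := by rw [← mul_pow, mul_inv_cancel₀ hζ0, one_pow]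
  linear_combination (w ζ * ζ ^ (q.natDegree - j) * eval ζ⁻¹ q / ζ) * hinv


section Ortho

variable (S : BiOrthoSystem w)

lemma natDeg_φ (n : ℕ) : (S.φ n).natDegree = n :=
  Polynomial.natDegree_eq_of_degree_eq_some (S.deg_φ n)

lemma natDeg_φb (n : ℕ) : (S.φb n).natDegree = n :=
  Polynomial.natDegree_eq_of_degree_eq_some (S.deg_φb n)

lemma φ_ne_zero (n : ℕ) : S.φ n ≠ 0 := fun h => by
  have := S.deg_φ n; rw [h, Polynomial.degree_zero] at this; exact absurd this (by simp)

lemma φb_ne_zero (n : ℕ) : S.φb n ≠ 0 := fun h => by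
  have := S.deg_φb n; rw [h, Polynomial.degree_zero] at this; exact absurd this (by simp)

lemma κ_ne_zero (n : ℕ) : S.κ n ≠ 0 := S.lead_ne n

lemma coeff_top_φ (n : ℕ) : (S.φ n).coeff n = S.κ n := by
  rw [BiOrthoSystem.κ, Polynomial.leadingCoeff, natDeg_φ]

lemma coeff_top_φb (n : ℕ) : (S.φb n).coeff n = S.κ n := by
  rw [BiOrthoSystem.κ, S.lead_eq n, Polynomial.leadingCoeff, natDeg_φb]

lemma ortho' (m n : ℕ) : Bf w (S.φ m) (S.φb n) = if m = n then 1 else 0 := S.ortho m n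

include hW in
lemma ortho_right (n : ℕ) (p : Polynomial ℂ) (hp : p.degree < (n : ℕ)) :
    Bf w p (S.φb n) = 0 := by
  have key : ∀ d : ℕ, ∀ p : Polynomial ℂ, p.natDegree = d → p.degree < (n : ℕ) →
      Bf w p (S.φb n) = 0 := by
    intro d
    induction d using Nat.strong_induction_on with
    | _ d IH =>
      intro p hd hp
      by_cases hp0 : p = 0
      · rw [hp0]; exact Bf_zero_left _
      · have hdn : d < n := by
          rw [← hd]; exact (Polynomial.natDegree_lt_iff_degree_lt hp0).mpr hp
        set c : ℂ := p.coeff d / S.κ d with hc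
        set r : Polynomial ℂ := p - C c * S.φ d with hr
        have hcn : c * S.κ d = p.coeff d := div_mul_cancel₀ _ (κ_ne_zero S d)
        have hcne : c ≠ 0 := by
          intro h
          rw [h, zero_mul] at hcn
          exact Polynomial.leadingCoeff_ne_zero.mpr hp0
            (by rw [Polynomial.leadingCoeff, hd]; exact hcn.symm)
        have hdeg_eq : p.degree = (C c * S.φ d).degree := by
          rw [Polynomial.degree_C_mul hcne, S.deg_φ d, Polynomial.degree_eq_natDegree hp0, hd]
        have hlead : p.leadingCoeff = (C c * S.φ d).leadingCoeff := by
          rw [Polynomial.leadingCoeff_mul, Polynomial.leadingCoeff_C,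
            Polynomial.leadingCoeff, hd]
          rw [show (S.φ d).leadingCoeff = S.κ d from rfl, hcn]
        have hrdeg : r.degree < p.degree := Polynomial.degree_sub_lt hdeg_eq hp0 hlead
        have hsplit : p = r + C c * S.φ d := by rw [hr]; ring
        have hB : Bf w p (S.φb n) = Bf w r (S.φb n) + c * Bf w (S.φ d) (S.φb n) := by
          rw [hsplit, Bf_add_left hW, Bf_smul_left]
        have hφd : Bf w (S.φ d) (S.φb n) = 0 := by
          rw [ortho' S d n, if_neg (Nat.ne_of_lt hdn)]
        have hr0 : Bf w r (S.φb n) = 0 := by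
          by_cases hrz : r = 0
          · rw [hrz]; exact Bf_zero_left _
          · exact IH r.natDegree
              (by rw [← hd]; exact Polynomial.natDegree_lt_natDegree hrz hrdeg)
              r rfl (lt_trans hrdeg hp)
        rw [hB, hφd, hr0, mul_zero, add_zero]
  exact key p.natDegree p rfl hp

include hW in
lemma ortho_left (n : ℕ) (q : Polynomial ℂ) (hq : q.degree < (n : ℕ)) :
    Bf w (S.φ n) q = 0 := by
  have key : ∀ d : ℕ, ∀ q : Polynomial ℂ, q.natDegree = d → q.degree < (n : ℕ) →
      Bf w (S.φ n) q = 0 := by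
    intro d
    induction d using Nat.strong_induction_on with
    | _ d IH =>
      intro q hd hq
      by_cases hq0 : q = 0
      · rw [hq0]; exact Bf_zero_right _
      · have hdn : d < n := by
          rw [← hd]; exact (Polynomial.natDegree_lt_iff_degree_lt hq0).mpr hq
        set c : ℂ := q.coeff d / S.κ d with hc
        set r : Polynomial ℂ := q - C c * S.φb d with hr
        have hcn : c * S.κ d = q.coeff d := div_mul_cancel₀ _ (κ_ne_zero S d)
        have hcne : c ≠ 0 := by
          intro h
          rw [h, zero_mul] at hcn
          exact Polynomial.leadingCoeff_ne_zero.mpr hq0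
            (by rw [Polynomial.leadingCoeff, hd]; exact hcn.symm)
        have hdeg_eq : q.degree = (C c * S.φb d).degree := by
          rw [Polynomial.degree_C_mul hcne, S.deg_φb d, Polynomial.degree_eq_natDegree hq0, hd]
        have hlead : q.leadingCoeff = (C c * S.φb d).leadingCoeff := by
          rw [Polynomial.leadingCoeff_mul, Polynomial.leadingCoeff_C,
            Polynomial.leadingCoeff, hd, ← S.lead_eq d]
          exact hcn.symm
        have hrdeg : r.degree < q.degree := Polynomial.degree_sub_lt hdeg_eq hq0 hlead
        have hsplit : q = r + C c * S.φb d := by rw [hr]; ring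
        have hB : Bf w (S.φ n) q = Bf w (S.φ n) r + c * Bf w (S.φ n) (S.φb d) := by
          rw [hsplit, Bf_add_right hW, Bf_smul_right]
        have hφd : Bf w (S.φ n) (S.φb d) = 0 := by
          rw [ortho' S n d, if_neg (Nat.ne_of_lt hdn).symm]
        have hr0 : Bf w (S.φ n) r = 0 := by
          by_cases hrz : r = 0
          · rw [hrz]; exact Bf_zero_right _
          · exact IH r.natDegree
              (by rw [← hd]; exact Polynomial.natDegree_lt_natDegree hrz hrdeg)
              r rfl (lt_trans hrdeg hq)
        rw [hB, hφd, hr0, mul_zero, add_zero]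
  exact key q.natDegree q rfl hq


include hW in
lemma pair_top_right (n : ℕ) (p : Polynomial ℂ) (hp : p.degree ≤ (n : ℕ)) :
    Bf w p (S.φb n) = p.coeff n / S.κ n := by
  set c : ℂ := p.coeff n / S.κ n with hc
  set r : Polynomial ℂ := p - C c * S.φ n with hr
  have hcn : c * S.κ n = p.coeff n := div_mul_cancel₀ _ (κ_ne_zero S n)
  have hrdeg : r.degree < (n : ℕ) := by
    refine (Polynomial.degree_lt_iff_coeff_zero _ _).mpr fun m hm => ?_
    have hm' : (n : ℕ) ≤ m := by exact_mod_cast hm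
    rcases eq_or_lt_of_le hm' with hEq | hLt
    · subst hEq
      simp only [hr, Polynomial.coeff_sub, Polynomial.coeff_C_mul, coeff_top_φ S n, hcn,
        sub_self]
    · have h1 : p.coeff m = 0 :=
        Polynomial.coeff_eq_zero_of_degree_lt (lt_of_le_of_lt hp (by exact_mod_cast hLt))
      have h2 : (S.φ n).coeff m = 0 :=
        Polynomial.coeff_eq_zero_of_degree_lt (by rw [S.deg_φ n]; exact_mod_cast hLt)
      simp [hr, h1, h2]
  have hsplit : p = r + C c * S.φ n := by rw [hr]; ring
  rw [hsplit, Bf_add_left hW, Bf_smul_left, ortho_right hW S n r hrdeg, ortho' S n n,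
    if_pos rfl, zero_add, mul_one]

include hW in
lemma pair_top_left (n : ℕ) (q : Polynomial ℂ) (hq : q.degree ≤ (n : ℕ)) :
    Bf w (S.φ n) q = q.coeff n / S.κ n := by
  set c : ℂ := q.coeff n / S.κ n with hc
  set r : Polynomial ℂ := q - C c * S.φb n with hr
  have hcn : c * S.κ n = q.coeff n := div_mul_cancel₀ _ (κ_ne_zero S n)
  have hrdeg : r.degree < (n : ℕ) := by
    refine (Polynomial.degree_lt_iff_coeff_zero _ _).mpr fun m hm => ?_
    have hm' : (n : ℕ) ≤ m := by exact_mod_cast hm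
    rcases eq_or_lt_of_le hm' with hEq | hLt
    · subst hEq
      simp only [hr, Polynomial.coeff_sub, Polynomial.coeff_C_mul, coeff_top_φb S n, hcn,
        sub_self]
    · have h1 : q.coeff m = 0 :=
        Polynomial.coeff_eq_zero_of_degree_lt (lt_of_le_of_lt hq (by exact_mod_cast hLt))
      have h2 : (S.φb n).coeff m = 0 :=
        Polynomial.coeff_eq_zero_of_degree_lt (by rw [S.deg_φb n]; exact_mod_cast hLt)
      simp [hr, h1, h2]
  have hsplit : q = r + C c * S.φb n := by rw [hr]; ring
  rw [hsplit, Bf_add_right hW, Bf_smul_right, ortho_left hW S n r hrdeg, ortho' S n n,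
    if_pos rfl, zero_add, mul_one]

include hW in
lemma Bstar (n : ℕ) (q : Polynomial ℂ) (hq : q.degree ≤ (n : ℕ)) :
    Bf w (S.φs n) q = q.coeff 0 / S.κ n := by
  have hmono : ∀ j : ℕ, j ≤ n → Bf w (S.φs n) (X ^ j)
      = (if j = 0 then 1 else 0) / S.κ n := by
    intro j hj
    have hnd : (S.φb n).natDegree = n := natDeg_φb S n
    have h1 : Bf w (S.φs n) (X ^ j) = Bf w (X ^ (n - j)) (S.φb n) := by
      have := Bf_reverse (w := w) (S.φb n) j (by rw [hnd]; exact hj)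
      rw [hnd] at this
      exact this
    rw [h1, pair_top_right hW S n _ (by
      rw [Polynomial.degree_X_pow]
      exact_mod_cast Nat.sub_le n j)]
    congr 1
    rw [Polynomial.coeff_X_pow]
    rcases Nat.eq_zero_or_pos j with hj0 | hjpos
    · subst hj0; simp
    · rw [if_neg (by omega), if_neg (by omega)]
  have hqd : q.natDegree < n + 1 :=
    Nat.lt_succ_of_le (Polynomial.natDegree_le_iff_degree_le.mpr hq)
  have hrepr := Polynomial.as_sum_range' q (n + 1) hqd
  calc Bf w (S.φs n) q = Bf w (S.φs n) (∑ j ∈ range (n + 1), C (q.coeff j) * X ^ j) := by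
        conv_lhs => rw [hrepr]
        congr 1
        exact Finset.sum_congr rfl fun j _ => (Polynomial.C_mul_X_pow_eq_monomial).symm
    _ = ∑ j ∈ range (n + 1), q.coeff j * ((if j = 0 then 1 else 0) / S.κ n) := by
        rw [Bf_sum_right hW]
        exact Finset.sum_congr rfl fun j hj => by
          rw [Bf_smul_right, hmono j (Nat.lt_succ_iff.mp (Finset.mem_range.mp hj))]
    _ = q.coeff 0 / S.κ n := by
        rw [Finset.sum_eq_single 0]
        · simp [div_eq_mul_inv]
        · intro j _ hj0; simp [hj0]
        · intro h; exact absurd (Finset.mem_range.mpr (Nat.succ_pos n)) h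

include hW in
lemma eq_zero_of_pair (m : ℕ) (P : Polynomial ℂ) (hdeg : P.degree ≤ (m : ℕ))
    (h : ∀ k, k ≤ m → Bf w P (S.φb k) = 0) : P = 0 := by
  by_contra hP
  have hd : P.natDegree ≤ m := Polynomial.natDegree_le_iff_degree_le.mpr hdeg
  have h1 := h P.natDegree hd
  have h2 := pair_top_right hW S P.natDegree P Polynomial.degree_le_natDegree
  rw [h1] at h2
  rw [← Polynomial.leadingCoeff] at h2
  have h4 : P.leadingCoeff = 0 :=
    (div_eq_zero_iff.mp h2.symm).resolve_right (κ_ne_zero S _)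
  exact hP (Polynomial.leadingCoeff_eq_zero.mp h4)


lemma degree_le_of_lt_succ {p : Polynomial ℂ} {n : ℕ}
    (h : p.degree < ((n + 1 : ℕ) : WithBot ℕ)) : p.degree ≤ (n : ℕ) := by
  by_cases hp : p = 0
  · simp [hp]
  · have h2 := (Polynomial.natDegree_lt_iff_degree_lt hp).mpr h
    refine le_trans Polynomial.degree_le_natDegree ?_
    exact_mod_cast Nat.lt_succ_iff.mp h2

include hW in
lemma Bf_shift (p q : Polynomial ℂ) :
    Bf w (X * p) q = Bf w p q.divX + q.coeff 0 * Bf w (X * p) 1 := by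
  conv_lhs => rw [← Polynomial.X_mul_divX_add q]
  rw [Bf_add_right hW, Bf_X_mul]
  congr 1
  rw [show (C (q.coeff 0) : Polynomial ℂ) = C (q.coeff 0) * 1 from (mul_one _).symm,
    Bf_smul_right]

/-- `c` coefficients in the expansion of `X φ_n`. -/
noncomputable def cc (n k : ℕ) : ℂ := Bf w (X * S.φ n) (S.φb k)

/-- `β_n = B(X φ_n, 1)`. -/
noncomputable def ββ (n : ℕ) : ℂ := Bf w (X * S.φ n) 1

include hW in
lemma hA (n k : ℕ) (hk : k ≤ n) :
    cc (w := w) S n k = (S.φb k).coeff 0 * ββ (w := w) S n := by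
  rw [cc, ββ, Bf_shift hW]
  have h0 : Bf w (S.φ n) (S.φb k).divX = 0 := by
    apply ortho_left hW S n
    calc (S.φb k).divX.degree < (S.φb k).degree :=
          Polynomial.degree_divX_lt (φb_ne_zero S k)
      _ = (k : ℕ) := S.deg_φb k
      _ ≤ (n : ℕ) := by exact_mod_cast hk
  rw [h0, zero_add]

include hW in
lemma hc1 (n : ℕ) :
    cc (w := w) S n (n + 1)
      = S.κ (n + 1) / S.κ n + (S.φb (n + 1)).coeff 0 * ββ (w := w) S n := by
  rw [cc, ββ, Bf_shift hW]
  have hdeg : (S.φb (n + 1)).divX.degree ≤ (n : ℕ) := by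
    have h := Polynomial.degree_divX_lt (φb_ne_zero S (n + 1))
    rw [S.deg_φb (n + 1)] at h
    exact degree_le_of_lt_succ (by exact_mod_cast h)
  rw [pair_top_left hW S n _ hdeg, Polynomial.coeff_divX, coeff_top_φb S (n + 1)]

include hW in
lemma expand_Xφ (n : ℕ) :
    X * S.φ n = ∑ k ∈ range (n + 2), C (cc (w := w) S n k) * S.φ k := by
  have hPdeg : (X * S.φ n - ∑ k ∈ range (n + 2), C (cc (w := w) S n k) * S.φ k).degree
      ≤ ((n + 1 : ℕ) : WithBot ℕ) := by
    refine le_trans (Polynomial.degree_sub_le _ _) (max_le ?_ ?_)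
    · refine le_trans (Polynomial.degree_mul_le _ _) ?_
      rw [Polynomial.degree_X, S.deg_φ n]
      exact_mod_cast (by omega : 1 + n ≤ n + 1)
    · refine le_trans (Polynomial.degree_sum_le _ _) ?_
      refine Finset.sup_le fun k hk => ?_
      have h1 : (C (cc (w := w) S n k) * S.φ k).degree ≤ (S.φ k).degree := by
        rw [← Polynomial.smul_eq_C_mul]
        exact Polynomial.degree_smul_le _ _
      refine le_trans h1 ?_
      rw [S.deg_φ k]
      have := Finset.mem_range.mp hk
      exact_mod_cast by omega
  have hzero : X * S.φ n - ∑ k ∈ range (n + 2), C (cc (w := w) S n k) * S.φ k = 0 := by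
    apply eq_zero_of_pair hW S (n + 1) _ hPdeg
    intro j hj
    rw [Bf_sub_left hW, Bf_sum_left hW]
    have hsum : ∑ k ∈ range (n + 2), Bf w (C (cc (w := w) S n k) * S.φ k) (S.φb j)
        = cc (w := w) S n j := by
      rw [Finset.sum_eq_single j]
      · rw [Bf_smul_left, ortho' S j j, if_pos rfl, mul_one]
      · intro k _ hkj
        rw [Bf_smul_left, ortho' S k j, if_neg hkj, mul_zero]
      · intro h
        exact absurd (Finset.mem_range.mpr (by omega)) h
    rw [hsum, cc, sub_self]
  linear_combination hzero

include hW in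
lemma E5 (n : ℕ) : S.κ n = cc (w := w) S n (n + 1) * S.κ (n + 1) := by
  have h := congrArg (fun p : Polynomial ℂ => p.coeff (n + 1)) (expand_Xφ hW S n)
  simp only [Polynomial.finset_sum_coeff, Polynomial.coeff_C_mul,
    Polynomial.coeff_X_mul, coeff_top_φ S n] at h
  rw [Finset.sum_range_succ] at h
  have hz : ∀ k ∈ range (n + 1), cc (w := w) S n k * (S.φ k).coeff (n + 1) = 0 := by
    intro k hk
    have : (S.φ k).coeff (n + 1) = 0 := by
      apply Polynomial.coeff_eq_zero_of_degree_lt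
      rw [S.deg_φ k]
      exact_mod_cast Nat.lt_succ_of_le (Nat.lt_succ_iff.mp (Finset.mem_range.mp hk))
    rw [this, mul_zero]
  rw [Finset.sum_eq_zero hz, zero_add, coeff_top_φ S (n + 1)] at h
  exact h

noncomputable def sσ (n : ℕ) : ℂ :=
  ∑ k ∈ range (n + 1), (S.φb k).coeff 0 * (S.φ k).coeff 0

include hW in
lemma E6 (n : ℕ) :
    0 = ββ (w := w) S n * sσ S n + cc (w := w) S n (n + 1) * (S.φ (n + 1)).coeff 0 := by
  have h := congrArg (fun p : Polynomial ℂ => p.coeff 0) (expand_Xφ hW S n)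
  simp only [Polynomial.finset_sum_coeff, Polynomial.coeff_C_mul,
    Polynomial.mul_coeff_zero, Polynomial.coeff_X_zero, zero_mul,
    Polynomial.coeff_C_zero] at h
  rw [Finset.sum_range_succ] at h
  have hs : ∑ k ∈ range (n + 1), cc (w := w) S n k * (S.φ k).coeff 0
      = ββ (w := w) S n * sσ S n := by
    rw [sσ, Finset.mul_sum]
    refine Finset.sum_congr rfl fun k hk => ?_
    rw [hA hW S n k (Nat.lt_succ_iff.mp (Finset.mem_range.mp hk))]
    ring
  rw [hs] at h
  exact h

include hW in
lemma phis_expand (n : ℕ) :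
    S.φs n = ∑ k ∈ range (n + 1), C ((S.φb k).coeff 0 / S.κ n) * S.φ k := by
  have hφsdeg : (S.φs n).degree ≤ ((n : ℕ) : WithBot ℕ) := by
    refine le_trans Polynomial.degree_le_natDegree ?_
    have : (S.φs n).natDegree ≤ n := by
      rw [BiOrthoSystem.φs]
      exact le_trans (Polynomial.reverse_natDegree_le _) (le_of_eq (natDeg_φb S n))
    exact_mod_cast this
  have hPdeg : (S.φs n - ∑ k ∈ range (n + 1), C ((S.φb k).coeff 0 / S.κ n) * S.φ k).degree
      ≤ ((n : ℕ) : WithBot ℕ) := by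
    refine le_trans (Polynomial.degree_sub_le _ _) (max_le hφsdeg ?_)
    refine le_trans (Polynomial.degree_sum_le _ _) ?_
    refine Finset.sup_le fun k hk => ?_
    have h1 : (C ((S.φb k).coeff 0 / S.κ n) * S.φ k).degree ≤ (S.φ k).degree := by
      rw [← Polynomial.smul_eq_C_mul]
      exact Polynomial.degree_smul_le _ _
    refine le_trans h1 ?_
    rw [S.deg_φ k]
    exact_mod_cast Nat.lt_succ_iff.mp (Finset.mem_range.mp hk)
  have hzero : S.φs n - ∑ k ∈ range (n + 1), C ((S.φb k).coeff 0 / S.κ n) * S.φ k = 0 := by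
    apply eq_zero_of_pair hW S n _ hPdeg
    intro j hj
    rw [Bf_sub_left hW, Bf_sum_left hW]
    have h1 : Bf w (S.φs n) (S.φb j) = (S.φb j).coeff 0 / S.κ n := by
      apply Bstar hW S n
      rw [S.deg_φb j]
      exact_mod_cast hj
    have hsum : ∑ k ∈ range (n + 1), Bf w (C ((S.φb k).coeff 0 / S.κ n) * S.φ k) (S.φb j)
        = (S.φb j).coeff 0 / S.κ n := by
      rw [Finset.sum_eq_single j]
      · rw [Bf_smul_left, ortho' S j j, if_pos rfl, mul_one]
      · intro k _ hkj
        rw [Bf_smul_left, ortho' S k j, if_neg hkj, mul_zero]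
      · intro h
        exact absurd (Finset.mem_range.mpr (by omega)) h
    rw [h1, hsum, sub_self]
  linear_combination hzero

include hW in
lemma s_eq (n : ℕ) : sσ S n = S.κ n ^ 2 := by
  have h := congrArg (fun p : Polynomial ℂ => p.coeff 0) (phis_expand hW S n)
  simp only [Polynomial.finset_sum_coeff, Polynomial.coeff_C_mul] at h
  have h0 : (S.φs n).coeff 0 = S.κ n := by
    rw [BiOrthoSystem.φs, Polynomial.coeff_zero_reverse, ← S.lead_eq n]
    rfl
  rw [h0] at h
  have h2 : S.κ n * S.κ n
      = (∑ k ∈ range (n + 1), (S.φb k).coeff 0 / S.κ n * (S.φ k).coeff 0) * S.κ n := by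
    rw [← h]
  rw [Finset.sum_mul] at h2
  have h3 : ∀ k ∈ range (n + 1),
      (S.φb k).coeff 0 / S.κ n * (S.φ k).coeff 0 * S.κ n
        = (S.φb k).coeff 0 * (S.φ k).coeff 0 := by
    intro k _
    rw [div_mul_eq_mul_div, div_mul_cancel₀ _ (κ_ne_zero S n)]
  rw [Finset.sum_congr rfl h3] at h2
  rw [sσ, ← h2]
  ring

include hW in
lemma hβ (n : ℕ) :
    ββ (w := w) S n = -((S.φ (n + 1)).coeff 0) / (S.κ n * S.κ (n + 1)) := by
  have h6 := E6 hW S n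
  rw [s_eq hW S n] at h6
  have h5 : cc (w := w) S n (n + 1) = S.κ n / S.κ (n + 1) :=
    eq_div_of_mul_eq (κ_ne_zero S (n + 1)) (E5 hW S n).symm
  rw [h5] at h6
  have hk0 : S.κ n ≠ 0 := κ_ne_zero S n
  have hk1 : S.κ (n + 1) ≠ 0 := κ_ne_zero S (n + 1)
  field_simp at h6
  rw [eq_div_iff (mul_ne_zero hk0 hk1)]
  apply mul_left_cancel₀ hk0
  linear_combination -h6

include hW in
lemma hββ (n : ℕ) :
    (S.φb (n + 1)).coeff 0 * ββ (w := w) S n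
      = S.κ n / S.κ (n + 1) - S.κ (n + 1) / S.κ n := by
  have h5 : cc (w := w) S n (n + 1) = S.κ n / S.κ (n + 1) :=
    eq_div_of_mul_eq (κ_ne_zero S (n + 1)) (E5 hW S n).symm
  have h1 := hc1 hW S n
  rw [h5] at h1
  linear_combination -h1

include hW in
lemma E4 (n : ℕ) :
    S.κ (n + 1) ^ 2 = S.κ n ^ 2 + (S.φ (n + 1)).coeff 0 * (S.φb (n + 1)).coeff 0 := by
  have h1 := hββ hW S n
  rw [hβ hW S n] at h1
  have hk0 : S.κ n ≠ 0 := κ_ne_zero S n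
  have hk1 : S.κ (n + 1) ≠ 0 := κ_ne_zero S (n + 1)
  field_simp at h1
  apply mul_left_cancel₀ (mul_ne_zero hk0 hk1)
  linear_combination (S.κ n * S.κ (n + 1)) * h1

include hW in
lemma R1 (n : ℕ) :
    C (S.κ n) * S.φ (n + 1)
      = C (S.κ (n + 1)) * (X * S.φ n) + C ((S.φ (n + 1)).coeff 0) * S.φs n := by
  set P : Polynomial ℂ := C (S.κ n) * S.φ (n + 1) - C (S.κ (n + 1)) * (X * S.φ n)
    - C ((S.φ (n + 1)).coeff 0) * S.φs n with hP
  have hφs_nd : (S.φs n).natDegree ≤ n := by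
    rw [BiOrthoSystem.φs]
    exact le_trans (Polynomial.reverse_natDegree_le _) (le_of_eq (natDeg_φb S n))
  have hPdeg : P.degree ≤ ((n : ℕ) : WithBot ℕ) := by
    refine (Polynomial.degree_le_iff_coeff_zero _ _).mpr fun m hm => ?_
    have hnm : n < m := by exact_mod_cast hm
    have h3 : (S.φs n).coeff m = 0 :=
      Polynomial.coeff_eq_zero_of_natDegree_lt (lt_of_le_of_lt hφs_nd hnm)
    rcases eq_or_lt_of_le (Nat.succ_le_of_lt hnm) with hEq | hLt
    · rw [hP]
      simp only [Polynomial.coeff_sub, Polynomial.coeff_C_mul, h3, mul_zero, sub_zero]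
      rw [← hEq, Polynomial.coeff_X_mul, coeff_top_φ S n,
        show (S.φ (n + 1)).coeff (n + 1) = S.κ (n + 1) from coeff_top_φ S (n + 1)]
      ring
    · have h1 : (S.φ (n + 1)).coeff m = 0 := by
        apply Polynomial.coeff_eq_zero_of_natDegree_lt
        rw [natDeg_φ S (n + 1)]; omega
      obtain ⟨m', rfl⟩ : ∃ m', m = m' + 1 := ⟨m - 1, by omega⟩
      have h2 : (S.φ n).coeff m' = 0 := by
        apply Polynomial.coeff_eq_zero_of_natDegree_lt
        rw [natDeg_φ S n]; omega
      rw [hP]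
      simp only [Polynomial.coeff_sub, Polynomial.coeff_C_mul, Polynomial.coeff_X_mul,
        h1, h2, h3, mul_zero, sub_zero, sub_self]
  have hzero : P = 0 := by
    apply eq_zero_of_pair hW S n _ hPdeg
    intro j hj
    have hb1 : Bf w (C (S.κ n) * S.φ (n + 1)) (S.φb j) = 0 := by
      rw [Bf_smul_left, ortho' S (n + 1) j, if_neg (by omega), mul_zero]
    have hb2 : Bf w (C (S.κ (n + 1)) * (X * S.φ n)) (S.φb j)
        = S.κ (n + 1) * ((S.φb j).coeff 0 * ββ (w := w) S n) := by
      rw [Bf_smul_left, ← cc, hA hW S n j hj]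
    have hb3 : Bf w (C ((S.φ (n + 1)).coeff 0) * S.φs n) (S.φb j)
        = (S.φ (n + 1)).coeff 0 * ((S.φb j).coeff 0 / S.κ n) := by
      rw [Bf_smul_left, Bstar hW S n _ (by rw [S.deg_φb j]; exact_mod_cast hj)]
    rw [hP, Bf_sub_left hW, Bf_sub_left hW, hb1, hb2, hb3]
    rw [hβ hW S n]
    have hk0 : S.κ n ≠ 0 := κ_ne_zero S n
    have hk1 : S.κ (n + 1) ≠ 0 := κ_ne_zero S (n + 1)
    field_simp
    ring
  have := sub_eq_zero.mp (by linear_combination hzero :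
    (C (S.κ n) * S.φ (n + 1) : Polynomial ℂ)
      - (C (S.κ (n + 1)) * (X * S.φ n) + C ((S.φ (n + 1)).coeff 0) * S.φs n) = 0)
  exact this

include hW in
lemma R2 (n : ℕ) :
    C (S.κ n) * S.φs (n + 1)
      = C (S.κ (n + 1)) * S.φs n + C ((S.φb (n + 1)).coeff 0) * (X * S.φ n) := by
  set P : Polynomial ℂ := C (S.κ n) * S.φs (n + 1) - C (S.κ (n + 1)) * S.φs n
    - C ((S.φb (n + 1)).coeff 0) * (X * S.φ n) with hP
  have hφs_nd : (S.φs n).natDegree ≤ n := by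
    rw [BiOrthoSystem.φs]
    exact le_trans (Polynomial.reverse_natDegree_le _) (le_of_eq (natDeg_φb S n))
  have hφs1_nd : (S.φs (n + 1)).natDegree ≤ n + 1 := by
    rw [BiOrthoSystem.φs]
    exact le_trans (Polynomial.reverse_natDegree_le _) (le_of_eq (natDeg_φb S (n + 1)))
  have hPdeg : P.degree ≤ ((n : ℕ) : WithBot ℕ) := by
    refine (Polynomial.degree_le_iff_coeff_zero _ _).mpr fun m hm => ?_
    have hnm : n < m := by exact_mod_cast hm
    have h2 : (S.φs n).coeff m = 0 :=
      Polynomial.coeff_eq_zero_of_natDegree_lt (lt_of_le_of_lt hφs_nd hnm)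
    rcases eq_or_lt_of_le (Nat.succ_le_of_lt hnm) with hEq | hLt
    · have h1 : (S.φs (n + 1)).coeff (n + 1) = (S.φb (n + 1)).coeff 0 := by
        rw [BiOrthoSystem.φs, Polynomial.coeff_reverse, natDeg_φb S (n + 1),
          Polynomial.revAt_le (le_refl (n + 1)), Nat.sub_self]
      rw [hP]
      simp only [Polynomial.coeff_sub, Polynomial.coeff_C_mul, h2, mul_zero, sub_zero]
      rw [← hEq, h1, Polynomial.coeff_X_mul, coeff_top_φ S n]
      ring
    · have h1 : (S.φs (n + 1)).coeff m = 0 :=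
        Polynomial.coeff_eq_zero_of_natDegree_lt (lt_of_le_of_lt hφs1_nd hLt)
      obtain ⟨m', rfl⟩ : ∃ m', m = m' + 1 := ⟨m - 1, by omega⟩
      have h4 : (S.φ n).coeff m' = 0 := by
        apply Polynomial.coeff_eq_zero_of_natDegree_lt
        rw [natDeg_φ S n]; omega
      rw [hP]
      simp only [Polynomial.coeff_sub, Polynomial.coeff_C_mul, Polynomial.coeff_X_mul,
        h1, h2, h4, mul_zero, sub_zero, sub_self]
  have hzero : P = 0 := by
    apply eq_zero_of_pair hW S n _ hPdeg
    intro j hj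
    have hjd : (S.φb j).degree ≤ ((n : ℕ) : WithBot ℕ) := by
      rw [S.deg_φb j]; exact_mod_cast hj
    have hb1 : Bf w (C (S.κ n) * S.φs (n + 1)) (S.φb j)
        = S.κ n * ((S.φb j).coeff 0 / S.κ (n + 1)) := by
      rw [Bf_smul_left, Bstar hW S (n + 1) _ (le_trans hjd (by exact_mod_cast Nat.le_succ n))]
    have hb2 : Bf w (C (S.κ (n + 1)) * S.φs n) (S.φb j)
        = S.κ (n + 1) * ((S.φb j).coeff 0 / S.κ n) := by
      rw [Bf_smul_left, Bstar hW S n _ hjd]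
    have hb3 : Bf w (C ((S.φb (n + 1)).coeff 0) * (X * S.φ n)) (S.φb j)
        = (S.φb (n + 1)).coeff 0 * ((S.φb j).coeff 0 * ββ (w := w) S n) := by
      rw [Bf_smul_left, ← cc, hA hW S n j hj]
    rw [hP, Bf_sub_left hW, Bf_sub_left hW, hb1, hb2, hb3]
    have hk0 : S.κ n ≠ 0 := κ_ne_zero S n
    have hk1 : S.κ (n + 1) ≠ 0 := κ_ne_zero S (n + 1)
    have h := hββ hW S n
    linear_combination -(S.φb j).coeff 0 * h
  have := sub_eq_zero.mp (by linear_combination hzero :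
    (C (S.κ n) * S.φs (n + 1) : Polynomial ℂ)
      - (C (S.κ (n + 1)) * S.φs n + C ((S.φb (n + 1)).coeff 0) * (X * S.φ n)) = 0)
  exact this

end Ortho
end TTRAux

/-- three-term (second order) recurrence relations, as polynomial identities. -/
theorem biOrtho_three_term_recurrence
    (w : ℂ → ℂ) (Δ₁ Δ₂ : ℝ) (hΔ₁ : Δ₁ < 1) (hΔ₂ : 1 < Δ₂)
    (hw : DifferentiableOn ℂ w {z : ℂ | Δ₁ < ‖z‖ ∧ ‖z‖ < Δ₂})
    (S : BiOrthoSystem w) (n : ℕ) (hn : 1 ≤ n) :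
    Polynomial.C (S.κ n * (S.φ n).coeff 0) * S.φ (n + 1)
        + Polynomial.C (S.κ (n - 1) * (S.φ (n + 1)).coeff 0) * (Polynomial.X * S.φ (n - 1))
      = (Polynomial.C (S.κ n * (S.φ (n + 1)).coeff 0)
          + Polynomial.C (S.κ (n + 1) * (S.φ n).coeff 0) * Polynomial.X) * S.φ n ∧
    Polynomial.C (S.κ n * (S.φb n).coeff 0) * S.φs (n + 1)
        + Polynomial.C (S.κ (n - 1) * (S.φb (n + 1)).coeff 0) * (Polynomial.X * S.φs (n - 1))
      = (Polynomial.C (S.κ n * (S.φb (n + 1)).coeff 0) * Polynomial.X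
          + Polynomial.C (S.κ (n + 1) * (S.φb n).coeff 0)) * S.φs n := by
  have hW : ContinuousOn w (Metric.sphere (0 : ℂ) 1) := by
    refine hw.continuousOn.mono fun z hz => ?_
    have : ‖z‖ = 1 := by
      simpa [Complex.dist_eq] using (Metric.mem_sphere.mp hz)
    exact ⟨by rw [this]; exact hΔ₁, by rw [this]; exact hΔ₂⟩
  obtain ⟨m, rfl⟩ : ∃ m, n = m + 1 := ⟨n - 1, (Nat.succ_pred_eq_of_pos hn).symm⟩
  simp only [Nat.add_sub_cancel]
  have hR1m := TTRAux.R1 hW S m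
  have hR1m1 := TTRAux.R1 hW S (m + 1)
  have hR2m := TTRAux.R2 hW S m
  have hR2m1 := TTRAux.R2 hW S (m + 1)
  have hE4 := TTRAux.E4 hW S m
  have hE4C := congrArg (Polynomial.C : ℂ →+* Polynomial ℂ) hE4
  simp only [map_add, map_mul, map_pow] at hE4C
  have ha : (Polynomial.C (S.κ m) : Polynomial ℂ) ≠ 0 :=
    Polynomial.C_ne_zero.mpr (TTRAux.κ_ne_zero S m)
  have hq : Polynomial.C ((S.φ (m + 1)).coeff 0) * S.φs (m + 1)
      = Polynomial.C (S.κ (m + 1)) * S.φ (m + 1)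
        - Polynomial.C (S.κ m) * (Polynomial.X * S.φ m) := by
    apply mul_left_cancel₀ ha
    linear_combination Polynomial.C ((S.φ (m + 1)).coeff 0) * hR2m
      - Polynomial.C (S.κ (m + 1)) * hR1m - (Polynomial.X * S.φ m) * hE4C
  have hqb : Polynomial.C ((S.φb (m + 1)).coeff 0) * S.φ (m + 1)
      = Polynomial.C (S.κ (m + 1)) * S.φs (m + 1)
        - Polynomial.C (S.κ m) * S.φs m := by
    apply mul_left_cancel₀ ha
    linear_combination Polynomial.C ((S.φb (m + 1)).coeff 0) * hR1m
      - Polynomial.C (S.κ (m + 1)) * hR2m - (S.φs m) * hE4C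
  constructor
  · simp only [map_mul]
    linear_combination Polynomial.C ((S.φ (m + 1)).coeff 0) * hR1m1
      + Polynomial.C ((S.φ (m + 2)).coeff 0) * hq
  · simp only [map_mul]
    linear_combination Polynomial.C ((S.φb (m + 1)).coeff 0) * hR2m1
      + (Polynomial.C ((S.φb (m + 2)).coeff 0) * Polynomial.X) * hqb
end

section
/- There exists a polynomial U(z) such that the Carathéodory function satisfies the first-order linear ODE W(z)·F′(z) = 2V(z)·F(z) + U(z) for all z ∈ ℂ with |z| ≠ 1. -/
open Complex Polynomial Finset
open scoped Real

/-- `W(z) = ∏_{j=1}^m (z - z_j)`. -/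
noncomputable def Wpoly {m : ℕ} (zs : Fin m → ℂ) : Polynomial ℂ :=
  ∏ j, (Polynomial.X - Polynomial.C (zs j))

/-- `V(z) = (W(z)/2) Σ_{j=1}^m ρ_j / (z - z_j)`, as a polynomial. -/
noncomputable def Vpoly {m : ℕ} (zs : Fin m → ℂ) (ρ : Fin m → ℂ) : Polynomial ℂ :=
  Polynomial.C (1 / 2 : ℂ) *
    ∑ j, Polynomial.C (ρ j) * ∏ k ∈ Finset.univ.erase j, (Polynomial.X - Polynomial.C (zs k))

/-- The Carathéodory function `F(z) = (1/2πi) ∮_𝕋 ((ζ+z)/(ζ-z)) w(ζ) dζ/ζ`. -/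
noncomputable def Cara (w : ℂ → ℂ) (z : ℂ) : ℂ :=
  (1 / (2 * Real.pi * Complex.I)) * ∮ ζ in C(0, 1), (ζ + z) / (ζ - z) * w ζ / ζ


private lemma SC_cint_sum {ι : Type*} (s : Finset ι) (f : ι → ℂ → ℂ)
    (hf : ∀ i ∈ s, ContinuousOn (f i) (Metric.sphere (0:ℂ) 1)) :
    (∮ ζ in C(0, 1), ∑ i ∈ s, f i ζ) = ∑ i ∈ s, ∮ ζ in C(0, 1), f i ζ := by
  have hc : ∀ i ∈ s, Continuous fun θ : ℝ => deriv (circleMap 0 1) θ • f i (circleMap 0 1 θ) := by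
    intro i hi
    have h1 : Continuous fun θ : ℝ => f i (circleMap 0 1 θ) :=
      (hf i hi).comp_continuous (continuous_circleMap 0 1) fun θ =>
        circleMap_mem_sphere 0 zero_le_one θ
    have h2 : Continuous (deriv (circleMap 0 1)) := by
      have : deriv (circleMap 0 1) = fun θ => circleMap 0 1 θ * I := funext (deriv_circleMap 0 1)
      rw [this]; exact (continuous_circleMap 0 1).mul continuous_const
    exact h2.smul h1
  simp only [circleIntegral, Finset.smul_sum]
  exact intervalIntegral.integral_finset_sum fun i hi => ((hc i hi).intervalIntegrable _ _)

private lemma SC_cint_add (f g : ℂ → ℂ) (hf : CircleIntegrable f 0 1)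
    (hg : CircleIntegrable g 0 1) :
    (∮ ζ in C(0, 1), (f ζ + g ζ)) = (∮ ζ in C(0, 1), f ζ) + ∮ ζ in C(0, 1), g ζ := by
  simp only [circleIntegral, smul_add]
  exact intervalIntegral.integral_add ((circleIntegrable_iff 1).mp hf)
    ((circleIntegrable_iff 1).mp hg)

private lemma SC_cint_add4 (f g h k : ℂ → ℂ) (hf : CircleIntegrable f 0 1)
    (hg : CircleIntegrable g 0 1) (hh : CircleIntegrable h 0 1)
    (hk : CircleIntegrable k 0 1) :
    (∮ ζ in C(0, 1), (f ζ + (g ζ + h ζ + k ζ))) =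
      (∮ ζ in C(0, 1), f ζ) + ((∮ ζ in C(0, 1), g ζ) + (∮ ζ in C(0, 1), h ζ)
        + ∮ ζ in C(0, 1), k ζ) := by
  have hf' := (circleIntegrable_iff (1:ℝ)).mp hf
  have hg' := (circleIntegrable_iff (1:ℝ)).mp hg
  have hh' := (circleIntegrable_iff (1:ℝ)).mp hh
  have hk' := (circleIntegrable_iff (1:ℝ)).mp hk
  simp only [circleIntegral, smul_add]
  rw [intervalIntegral.integral_add hf' ((hg'.add hh').add hk'),
    intervalIntegral.integral_add (hg'.add hh') hk',
    intervalIntegral.integral_add hg' hh']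

private lemma SC_eval_sub (P : Polynomial ℂ) {N : ℕ} (hN : P.natDegree < N) (z ζ : ℂ) :
    P.eval z - P.eval ζ
      = (z - ζ) * ∑ i ∈ Finset.range N, P.coeff i *
          ∑ k ∈ Finset.range i, z ^ k * ζ ^ (i - 1 - k) := by
  rw [Polynomial.eval_eq_sum_range' hN, Polynomial.eval_eq_sum_range' hN,
    ← Finset.sum_sub_distrib, Finset.mul_sum]
  exact Finset.sum_congr rfl fun i _ => by linear_combination (-(P.coeff i)) * geom_sum₂_mul z ζ i

private lemma SC_derivative_eval_eq (P : Polynomial ℂ) {N : ℕ} (hN : P.natDegree < N) (ζ : ℂ) :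
    P.derivative.eval ζ
      = ∑ i ∈ Finset.range N, P.coeff i * ∑ k ∈ Finset.range i, ζ ^ k * ζ ^ (i - 1 - k) := by
  rw [Polynomial.derivative_eval, Polynomial.sum_over_range' P (by simp) N hN]
  refine Finset.sum_congr rfl fun i _ => ?_
  have h : ∀ k ∈ Finset.range i, ζ ^ k * ζ ^ (i - 1 - k) = ζ ^ (i - 1) := fun k hk => by
    rw [← pow_add]; congr 1; have := Finset.mem_range.mp hk; omega
  rw [Finset.sum_congr rfl h, Finset.sum_const, Finset.card_range, nsmul_eq_mul]
  ring

private lemma SC_eval_taylor2 (P : Polynomial ℂ) {N : ℕ} (hN : P.natDegree < N) (z ζ : ℂ) :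
    P.eval z - P.eval ζ - (z - ζ) * P.derivative.eval ζ
      = (z - ζ) ^ 2 * ∑ i ∈ Finset.range N, P.coeff i *
          ∑ k ∈ Finset.range i, ζ ^ (i - 1 - k) *
            ∑ r ∈ Finset.range k, z ^ r * ζ ^ (k - 1 - r) := by
  have key : (∑ i ∈ Finset.range N, P.coeff i * ∑ k ∈ Finset.range i, z ^ k * ζ ^ (i - 1 - k))
      - (∑ i ∈ Finset.range N, P.coeff i * ∑ k ∈ Finset.range i, ζ ^ k * ζ ^ (i - 1 - k))
      = (z - ζ) * ∑ i ∈ Finset.range N, P.coeff i *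
          ∑ k ∈ Finset.range i, ζ ^ (i - 1 - k) *
            ∑ r ∈ Finset.range k, z ^ r * ζ ^ (k - 1 - r) := by
    rw [← Finset.sum_sub_distrib, Finset.mul_sum]
    refine Finset.sum_congr rfl fun i _ => ?_
    have inner : ∀ k ∈ Finset.range i,
        z ^ k * ζ ^ (i - 1 - k) - ζ ^ k * ζ ^ (i - 1 - k)
          = (z - ζ) * (ζ ^ (i - 1 - k) * ∑ r ∈ Finset.range k, z ^ r * ζ ^ (k - 1 - r)) :=
      fun k _ => by linear_combination (-(ζ ^ (i - 1 - k))) * geom_sum₂_mul z ζ k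
    calc P.coeff i * (∑ k ∈ Finset.range i, z ^ k * ζ ^ (i - 1 - k))
          - P.coeff i * ∑ k ∈ Finset.range i, ζ ^ k * ζ ^ (i - 1 - k)
        = P.coeff i * ∑ k ∈ Finset.range i,
            (z ^ k * ζ ^ (i - 1 - k) - ζ ^ k * ζ ^ (i - 1 - k)) := by
          rw [← mul_sub, Finset.sum_sub_distrib]
      _ = P.coeff i * ∑ k ∈ Finset.range i,
            (z - ζ) * (ζ ^ (i - 1 - k) * ∑ r ∈ Finset.range k, z ^ r * ζ ^ (k - 1 - r)) := by
          rw [Finset.sum_congr rfl inner]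
      _ = (z - ζ) * (P.coeff i * ∑ k ∈ Finset.range i,
            ζ ^ (i - 1 - k) * ∑ r ∈ Finset.range k, z ^ r * ζ ^ (k - 1 - r)) := by
          rw [← Finset.mul_sum]; ring
  rw [SC_eval_sub P hN z ζ, SC_derivative_eval_eq P hN ζ]
  linear_combination (z - ζ) * key

private lemma SC_kernel_id (Wz Wc Wpc Vz Vc wc z ζ d1 d2 : ℂ) (hζ : ζ ≠ 0) (hne : ζ ≠ z)
    (h2 : Wz - Wc - (z - ζ) * Wpc = (z - ζ) ^ 2 * d2)
    (h1 : Vz - Vc = (z - ζ) * d1) :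
    Wz * (2 * ζ / (ζ - z) ^ 2 * wc / ζ) - 2 * Vz * ((ζ + z) / (ζ - z) * wc / ζ)
      = (-2) * ((Wpc * wc + 2 * Vc * wc) * (ζ - z) - Wc * wc) / (ζ - z) ^ 2
        + (2 * wc * d2 + 4 * wc * d1 + 2 * Vz * (wc / ζ)) := by
  have hzζ : ζ - z ≠ 0 := sub_ne_zero.2 hne
  have hWz : Wz = (z - ζ) ^ 2 * d2 + Wc + (z - ζ) * Wpc := by linear_combination h2
  have hVz : Vz = (z - ζ) * d1 + Vc := by linear_combination h1
  subst hWz hVz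
  field_simp
  ring

private lemma SC_sphere_dist {z x : ℂ} (hz : ‖z‖ ≠ 1)
    (hx : x ∈ Metric.ball z (|‖z‖ - 1| / 2)) (θ : ℝ) :
    |‖z‖ - 1| / 2 ≤ ‖circleMap 0 1 θ - x‖ := by
  have h1 : ‖circleMap 0 1 θ‖ = 1 := by simp
  have h2 : ‖x - z‖ < |‖z‖ - 1| / 2 := by
    have := Metric.mem_ball.mp hx
    rwa [dist_eq_norm] at this
  have h3 : |‖circleMap 0 1 θ‖ - ‖x‖|
      ≤ ‖circleMap 0 1 θ - x‖ := abs_norm_sub_norm_le (circleMap 0 1 θ) x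
  have h4 : |‖x‖ - ‖z‖| ≤ ‖x - z‖ := abs_norm_sub_norm_le x z
  have h5 : |‖z‖ - 1| ≤ |‖z‖ - ‖x‖| + |‖x‖ - 1| :=
    abs_sub_le _ _ _
  rw [h1] at h3
  have h6 : |‖x‖ - ‖z‖| = |‖z‖ - ‖x‖| := abs_sub_comm _ _
  have h7 : |1 - ‖x‖| = |‖x‖ - 1| := abs_sub_comm _ _
  linarith

private lemma SC_cara_hasDerivAt {w : ℂ → ℂ} (hwc : ContinuousOn w (Metric.sphere (0:ℂ) 1))
    {z : ℂ} (hz : ‖z‖ ≠ 1) :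
    HasDerivAt (Cara w)
      ((1 / (2 * Real.pi * Complex.I)) *
        ∮ ζ in C(0, 1), 2 * ζ / (ζ - z) ^ 2 * w ζ / ζ) z := by
  set d : ℝ := |‖z‖ - 1| with hd
  have hd0 : 0 < d := abs_pos.2 (sub_ne_zero.2 hz)
  have hd2 : 0 < d / 2 := by linarith
  obtain ⟨Cw, hCw⟩ := (isCompact_sphere (0:ℂ) 1).exists_bound_of_continuousOn hwc
  have hCw0 : 0 ≤ Cw := le_trans (norm_nonneg (w 1)) (hCw 1 (by simp))
  set F : ℂ → ℝ → ℂ := fun x θ =>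
    deriv (circleMap 0 1) θ •
      ((circleMap 0 1 θ + x) / (circleMap 0 1 θ - x) * w (circleMap 0 1 θ) / circleMap 0 1 θ)
    with hFdef
  set F' : ℂ → ℝ → ℂ := fun x θ =>
    deriv (circleMap 0 1) θ •
      (2 * circleMap 0 1 θ / (circleMap 0 1 θ - x) ^ 2 * w (circleMap 0 1 θ) / circleMap 0 1 θ)
    with hF'def
  have hζ0 : ∀ θ : ℝ, circleMap 0 1 θ ≠ 0 := fun θ => circleMap_ne_center one_ne_zero
  have hwcont : Continuous fun θ : ℝ => w (circleMap 0 1 θ) :=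
    hwc.comp_continuous (continuous_circleMap 0 1) fun θ => circleMap_mem_sphere 0 zero_le_one θ
  have hcmc : Continuous (circleMap 0 1) := continuous_circleMap 0 1
  have hdc : Continuous (deriv (circleMap 0 1)) := by
    have : deriv (circleMap 0 1) = fun θ => circleMap 0 1 θ * I := funext (deriv_circleMap 0 1)
    rw [this]; exact hcmc.mul continuous_const
  have hne : ∀ x ∈ Metric.ball z (d / 2), ∀ θ : ℝ, circleMap 0 1 θ - x ≠ 0 := by
    intro x hx θ
    have := SC_sphere_dist hz hx θ
    intro h
    rw [h, norm_zero] at this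
    linarith
  have hcontF : ∀ x ∈ Metric.ball z (d / 2), Continuous (F x) := by
    intro x hx
    apply hdc.smul
    exact ((hcmc.add continuous_const).div (hcmc.sub continuous_const) (hne x hx)).mul
      hwcont |>.div hcmc hζ0
  have hcontF' : ∀ x ∈ Metric.ball z (d / 2), Continuous (F' x) := by
    intro x hx
    apply hdc.smul
    exact (((continuous_const.mul hcmc).div ((hcmc.sub continuous_const).pow 2)
      (fun θ => pow_ne_zero 2 (hne x hx θ))).mul hwcont).div hcmc hζ0
  have hzmem : z ∈ Metric.ball z (d / 2) := Metric.mem_ball_self hd2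
  have key := intervalIntegral.hasDerivAt_integral_of_dominated_loc_of_deriv_le
    (F := F) (F' := F') (x₀ := z) (a := 0) (b := 2 * π)
    (bound := fun _ => 2 * Cw / (d / 2) ^ 2) (μ := MeasureTheory.volume) (Metric.ball_mem_nhds z hd2)
    ?meas ?int ?meas' ?bnd ?bint ?diff
  case meas =>
    filter_upwards [Metric.ball_mem_nhds z hd2] with x hx
    exact (hcontF x hx).aestronglyMeasurable.restrict
  case int => exact (hcontF z hzmem).intervalIntegrable _ _
  case meas' => exact (hcontF' z hzmem).aestronglyMeasurable.restrict
  case bnd =>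
    refine MeasureTheory.ae_of_all _ fun θ _ x hx => ?_
    have h1 : ‖circleMap 0 1 θ‖ = 1 := by simp
    have h2 : ‖deriv (circleMap 0 1) θ‖ = 1 := by
      rw [deriv_circleMap, norm_mul, h1, Complex.norm_I, mul_one]
    have h3 : d / 2 ≤ ‖circleMap 0 1 θ - x‖ := SC_sphere_dist hz hx θ
    have h4 : ‖w (circleMap 0 1 θ)‖ ≤ Cw := hCw _ (circleMap_mem_sphere 0 zero_le_one θ)
    have : ‖F' x θ‖ = 2 * ‖w (circleMap 0 1 θ)‖ / ‖circleMap 0 1 θ - x‖ ^ 2 := by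
      simp only [hF'def, norm_smul, h2, one_mul, norm_div, norm_mul, norm_pow,
        h1]
      rw [Complex.norm_two]
      field_simp
    rw [this]
    have h5 : (d / 2) ^ 2 ≤ ‖circleMap 0 1 θ - x‖ ^ 2 := by
      nlinarith [h3, hd2.le, norm_nonneg (circleMap 0 1 θ - x)]
    exact div_le_div₀ (by linarith) (by linarith) (by positivity) h5
  case bint => exact intervalIntegrable_const
  case diff =>
    refine MeasureTheory.ae_of_all _ fun θ _ x hx => ?_
    have hx0 : circleMap 0 1 θ - x ≠ 0 := hne x hx θ
    have h1 : HasDerivAt (fun y : ℂ => (circleMap 0 1 θ + y) / (circleMap 0 1 θ - y))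
        ((1 * (circleMap 0 1 θ - x) - (circleMap 0 1 θ + x) * (-1)) / (circleMap 0 1 θ - x) ^ 2)
        x := ((hasDerivAt_id x).const_add (circleMap 0 1 θ)).div
          ((hasDerivAt_id x).const_sub (circleMap 0 1 θ)) hx0
    have h1' : HasDerivAt (fun y : ℂ => (circleMap 0 1 θ + y) / (circleMap 0 1 θ - y))
        (2 * circleMap 0 1 θ / (circleMap 0 1 θ - x) ^ 2) x := by
      convert h1 using 1
      ring
    have h2 := ((h1'.mul_const (w (circleMap 0 1 θ))).div_const (circleMap 0 1 θ)).const_smul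
      (deriv (circleMap 0 1) θ)
    exact h2
  have hEq : Cara w = fun x => (1 / (2 * Real.pi * Complex.I)) * ∫ θ in (0:ℝ)..(2 * π), F x θ := by
    funext x
    simp only [Cara, circleIntegral, hFdef]
  rw [hEq]
  have : (∮ ζ in C(0, 1), 2 * ζ / (ζ - z) ^ 2 * w ζ / ζ) = ∫ θ in (0:ℝ)..(2 * π), F' z θ := by
    simp only [circleIntegral, hF'def]
  rw [this]
  exact key.2.const_mul _


/-- for a regular semi-classical weight (characterised by the log-derivative
relation `W w' = 2 V w`), the Carathéodory function satisfies
`W(z) F'(z) = 2 V(z) F(z) + U(z)` for a polynomial `U`. -/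
theorem caratheodory_linear_ode
    (m : ℕ) (hm : 2 ≤ m) (zs : Fin m → ℂ) (hinj : Function.Injective zs)
    (hcirc : ∀ j, ‖zs j‖ ≠ 1)
    (ρ : Fin m → ℂ) (hρ : ∀ j, ∀ k : ℕ, ρ j ≠ (k : ℂ))
    (w : ℂ → ℂ) (Δ₁ Δ₂ : ℝ) (hΔ₁ : Δ₁ < 1) (hΔ₂ : 1 < Δ₂)
    (havoid : ∀ j, ¬(Δ₁ < ‖zs j‖ ∧ ‖zs j‖ < Δ₂))
    (hw : DifferentiableOn ℂ w {z : ℂ | Δ₁ < ‖z‖ ∧ ‖z‖ < Δ₂})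
    (hw0 : ∀ z : ℂ, Δ₁ < ‖z‖ → ‖z‖ < Δ₂ → w z ≠ 0)
    (hode : ∀ z : ℂ, Δ₁ < ‖z‖ → ‖z‖ < Δ₂ →
      (Wpoly zs).eval z * deriv w z = 2 * (Vpoly zs ρ).eval z * w z) :
    ∃ U : Polynomial ℂ, ∀ z : ℂ, ‖z‖ ≠ 1 →
      (Wpoly zs).eval z * deriv (Cara w) z
        = 2 * (Vpoly zs ρ).eval z * Cara w z + U.eval z := by
  classical
  set Wp : Polynomial ℂ := Wpoly zs with hWpdef
  set Vp : Polynomial ℂ := Vpoly zs ρ with hVpdef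
  set N : ℕ := m + 1 with hNdef
  have hWdeg : Wp.natDegree < N := by
    have h1 : Wp.natDegree ≤ ∑ j : Fin m, (Polynomial.X - Polynomial.C (zs j)).natDegree :=
      Polynomial.natDegree_prod_le _ _
    have h2 : ∑ j : Fin m, (Polynomial.X - Polynomial.C (zs j)).natDegree = m := by
      simp [Polynomial.natDegree_X_sub_C]
    omega
  have hVdeg : Vp.natDegree < N := by
    have h2 : ∀ j ∈ Finset.univ, (Polynomial.C (ρ j) *
        ∏ k ∈ Finset.univ.erase j, (Polynomial.X - Polynomial.C (zs k))).natDegree ≤ m := by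
      intro j _
      refine le_trans Polynomial.natDegree_mul_le ?_
      have h3 : (∏ k ∈ Finset.univ.erase j, (Polynomial.X - Polynomial.C (zs k))).natDegree
          ≤ ∑ k ∈ Finset.univ.erase j, (Polynomial.X - Polynomial.C (zs k)).natDegree :=
        Polynomial.natDegree_prod_le _ _
      have h4 : ∑ k ∈ Finset.univ.erase j, (Polynomial.X - Polynomial.C (zs k)).natDegree
          = (Finset.univ.erase j).card := by
        simp [Polynomial.natDegree_X_sub_C]
      have h5 : (Finset.univ.erase j).card ≤ m := le_trans Finset.card_erase_le (by simp)
      rw [Polynomial.natDegree_C]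
      omega
    have h1 : Vp.natDegree ≤ m := by
      refine le_trans Polynomial.natDegree_mul_le ?_
      have := Polynomial.natDegree_sum_le_of_forall_le Finset.univ
        (fun j : Fin m => Polynomial.C (ρ j) *
          ∏ k ∈ Finset.univ.erase j, (Polynomial.X - Polynomial.C (zs k))) h2
      rw [Polynomial.natDegree_C]
      simpa [Vpoly] using this
    omega
  have hA : IsOpen {y : ℂ | Δ₁ < ‖y‖ ∧ ‖y‖ < Δ₂} :=
    (isOpen_lt continuous_const continuous_norm).and
      (isOpen_lt continuous_norm continuous_const)
  have hsub : Metric.sphere (0:ℂ) 1 ⊆ {y : ℂ | Δ₁ < ‖y‖ ∧ ‖y‖ < Δ₂} := by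
    intro ζ hζ
    have h1 : ‖ζ‖ = 1 := by
      have := mem_sphere_zero_iff_norm.mp hζ
      exact this
    exact ⟨by rw [h1]; exact hΔ₁, by rw [h1]; exact hΔ₂⟩
  have hwc : ContinuousOn w (Metric.sphere (0:ℂ) 1) := hw.continuousOn.mono hsub
  have hwd : ∀ ζ ∈ Metric.sphere (0:ℂ) 1, HasDerivAt w (deriv w ζ) ζ := fun ζ hζ =>
    (hw.differentiableAt (hA.mem_nhds (hsub hζ))).hasDerivAt
  have hodeS : ∀ ζ ∈ Metric.sphere (0:ℂ) 1,
      Wp.eval ζ * deriv w ζ = 2 * Vp.eval ζ * w ζ := fun ζ hζ =>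
    hode ζ (hsub hζ).1 (hsub hζ).2
  have hsph0 : ∀ ζ ∈ Metric.sphere (0:ℂ) 1, ζ ≠ (0:ℂ) := by
    intro ζ hζ h
    have := mem_sphere_zero_iff_norm.mp hζ
    rw [h] at this
    simp at this
  set J : ℕ → ℂ := fun t => ∮ ζ in C(0, 1), w ζ * ζ ^ t with hJdef
  set μ0 : ℂ := ∮ ζ in C(0, 1), w ζ / ζ with hμdef
  set U0 : Polynomial ℂ :=
      (∑ i ∈ Finset.range N, Polynomial.C (Wp.coeff i) *
        ∑ k ∈ Finset.range i, ∑ r ∈ Finset.range k,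
          Polynomial.C (2 * J (i - 1 - k + (k - 1 - r))) * Polynomial.X ^ r)
    + ((∑ i ∈ Finset.range N, Polynomial.C (Vp.coeff i) *
        ∑ k ∈ Finset.range i, Polynomial.C (4 * J (i - 1 - k)) * Polynomial.X ^ k)
    + Polynomial.C (2 * μ0) * Vp) with hU0def
  refine ⟨Polynomial.C (1 / (2 * (Real.pi : ℂ) * Complex.I)) * U0, ?_⟩
  intro z hz
  have hzS : ∀ ζ ∈ Metric.sphere (0:ℂ) 1, ζ ≠ z := by
    intro ζ hζ h
    have h1 : ‖ζ‖ = 1 := by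
      have := mem_sphere_zero_iff_norm.mp hζ
      exact this
    rw [h] at h1
    exact hz h1
  have hsubz : ∀ ζ ∈ Metric.sphere (0:ℂ) 1, ζ - z ≠ 0 := fun ζ hζ =>
    sub_ne_zero.2 (hzS ζ hζ)
  have hpow2 : ∀ ζ ∈ Metric.sphere (0:ℂ) 1, (ζ - z) ^ 2 ≠ 0 := fun ζ hζ =>
    pow_ne_zero 2 (hsubz ζ hζ)
  -- the derivative of the Caratheodory function
  have hder := SC_cara_hasDerivAt hwc hz
  rw [hder.deriv]
  have hCz : Cara w z = (1 / (2 * (Real.pi : ℂ) * Complex.I)) *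
      ∮ ζ in C(0, 1), (ζ + z) / (ζ - z) * w ζ / ζ := rfl
  rw [hCz, Polynomial.eval_mul, Polynomial.eval_C]
  -- continuity helpers
  have hCid : ContinuousOn (fun ζ : ℂ => ζ) (Metric.sphere (0:ℂ) 1) := continuousOn_id
  have hcont1 : ContinuousOn (fun ζ : ℂ => 2 * ζ / (ζ - z) ^ 2 * w ζ / ζ)
      (Metric.sphere (0:ℂ) 1) :=
    (((continuousOn_const.mul hCid).div ((hCid.sub continuousOn_const).pow 2) hpow2).mul
      hwc).div hCid hsph0
  have hcont2 : ContinuousOn (fun ζ : ℂ => (ζ + z) / (ζ - z) * w ζ / ζ)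
      (Metric.sphere (0:ℂ) 1) :=
    (((hCid.add continuousOn_const).div (hCid.sub continuousOn_const) hsubz).mul
      hwc).div hCid hsph0
  -- names for the pieces
  set Df : ℂ → ℂ := fun ζ =>
    (-2) * ((Wp.derivative.eval ζ * w ζ + 2 * Vp.eval ζ * w ζ) * (ζ - z) - Wp.eval ζ * w ζ)
      / (ζ - z) ^ 2 with hDfdef
  set R1 : ℂ → ℂ := fun ζ => 2 * w ζ * ∑ i ∈ Finset.range N, Wp.coeff i *
      ∑ k ∈ Finset.range i, ζ ^ (i - 1 - k) *
        ∑ r ∈ Finset.range k, z ^ r * ζ ^ (k - 1 - r) with hR1def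
  set R2 : ℂ → ℂ := fun ζ => 4 * w ζ * ∑ i ∈ Finset.range N, Vp.coeff i *
      ∑ k ∈ Finset.range i, z ^ k * ζ ^ (i - 1 - k) with hR2def
  set R3 : ℂ → ℂ := fun ζ => 2 * Vp.eval z * (w ζ / ζ) with hR3def
  -- continuity of the pieces
  have hcDf : ContinuousOn Df (Metric.sphere (0:ℂ) 1) := by
    rw [hDfdef]
    exact (continuousOn_const.mul ((((Wp.derivative.continuousOn.mul hwc).add
      ((continuousOn_const.mul Vp.continuousOn).mul hwc)).mul
      (hCid.sub continuousOn_const)).sub (Wp.continuousOn.mul hwc))).div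
      ((hCid.sub continuousOn_const).pow 2) hpow2
  have hcpows : ∀ a b : ℕ, ContinuousOn (fun ζ : ℂ => ζ ^ a * ∑ r ∈ Finset.range b,
      z ^ r * ζ ^ (b - 1 - r)) (Metric.sphere (0:ℂ) 1) := by
    intro a b
    exact (hCid.pow a).mul (continuousOn_finset_sum _ fun r _ =>
      continuousOn_const.mul (hCid.pow _))
  have hcR1 : ContinuousOn R1 (Metric.sphere (0:ℂ) 1) := by
    rw [hR1def]
    exact (continuousOn_const.mul hwc).mul (continuousOn_finset_sum _ fun i _ =>
      continuousOn_const.mul (continuousOn_finset_sum _ fun k _ => hcpows _ _))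
  have hcR2 : ContinuousOn R2 (Metric.sphere (0:ℂ) 1) := by
    rw [hR2def]
    exact (continuousOn_const.mul hwc).mul (continuousOn_finset_sum _ fun i _ =>
      continuousOn_const.mul (continuousOn_finset_sum _ fun k _ =>
        continuousOn_const.mul (hCid.pow _)))
  have hcR3 : ContinuousOn R3 (Metric.sphere (0:ℂ) 1) := by
    rw [hR3def]
    exact continuousOn_const.mul (hwc.div hCid hsph0)
  -- the key integral identity
  have key : Wp.eval z * (∮ ζ in C(0, 1), 2 * ζ / (ζ - z) ^ 2 * w ζ / ζ)
      - 2 * Vp.eval z * (∮ ζ in C(0, 1), (ζ + z) / (ζ - z) * w ζ / ζ) = U0.eval z := by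
    have e1 : Wp.eval z * (∮ ζ in C(0, 1), 2 * ζ / (ζ - z) ^ 2 * w ζ / ζ)
        = ∮ ζ in C(0, 1), Wp.eval z * (2 * ζ / (ζ - z) ^ 2 * w ζ / ζ) :=
      (circleIntegral.integral_const_mul _ _ 0 1).symm
    have e2 : 2 * Vp.eval z * (∮ ζ in C(0, 1), (ζ + z) / (ζ - z) * w ζ / ζ)
        = ∮ ζ in C(0, 1), 2 * Vp.eval z * ((ζ + z) / (ζ - z) * w ζ / ζ) :=
      (circleIntegral.integral_const_mul _ _ 0 1).symm
    rw [e1, e2, ← circleIntegral.integral_sub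
      (f := fun ζ => Wp.eval z * (2 * ζ / (ζ - z) ^ 2 * w ζ / ζ))
      (g := fun ζ => 2 * Vp.eval z * ((ζ + z) / (ζ - z) * w ζ / ζ))
      ((continuousOn_const.mul hcont1).circleIntegrable zero_le_one)
      ((continuousOn_const.mul hcont2).circleIntegrable zero_le_one)]
    have e3 : (∮ ζ in C(0, 1), (Wp.eval z * (2 * ζ / (ζ - z) ^ 2 * w ζ / ζ)
          - 2 * Vp.eval z * ((ζ + z) / (ζ - z) * w ζ / ζ)))
        = ∮ ζ in C(0, 1), (Df ζ + (R1 ζ + R2 ζ + R3 ζ)) := by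
      refine circleIntegral.integral_congr zero_le_one fun ζ hζ => ?_
      have h2' := SC_eval_taylor2 Wp hWdeg z ζ
      have h1' := SC_eval_sub Vp hVdeg z ζ
      simp only [hDfdef, hR1def, hR2def, hR3def]
      exact SC_kernel_id (Wp.eval z) (Wp.eval ζ) (Wp.derivative.eval ζ) (Vp.eval z)
        (Vp.eval ζ) (w ζ) z ζ _ _ (hsph0 ζ hζ) (hzS ζ hζ) h2' h1'
    rw [e3, SC_cint_add4 Df R1 R2 R3 (hcDf.circleIntegrable zero_le_one)
      (hcR1.circleIntegrable zero_le_one) (hcR2.circleIntegrable zero_le_one)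
      (hcR3.circleIntegrable zero_le_one)]
    -- ∮ Df = 0
    have hDf0 : (∮ ζ in C(0, 1), Df ζ) = 0 := by
      refine circleIntegral.integral_eq_zero_of_hasDerivWithinAt
        (f := fun ζ => (-2) * (Wp.eval ζ * w ζ) / (ζ - z)) zero_le_one fun ζ hζ => ?_
      have hnum : HasDerivAt (fun t : ℂ => Wp.eval t * w t)
          (Wp.derivative.eval ζ * w ζ + Wp.eval ζ * deriv w ζ) ζ :=
        (Wp.hasDerivAt ζ).mul (hwd ζ hζ)
      have hden : HasDerivAt (fun t : ℂ => t - z) 1 ζ := (hasDerivAt_id ζ).sub_const z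
      have hq : HasDerivAt (fun ζ => (-2) * (Wp.eval ζ * w ζ) / (ζ - z)) _ ζ :=
        (hnum.const_mul (-2:ℂ)).div hden (hsubz ζ hζ)
      refine HasDerivAt.hasDerivWithinAt ?_
      refine hq.congr_deriv ?_
      simp only [hDfdef]
      rw [hodeS ζ hζ]
      ring
    rw [hDf0, zero_add]
    -- compute the three remaining integrals
    have hR1int : (∮ ζ in C(0, 1), R1 ζ) = ∑ i ∈ Finset.range N, ∑ k ∈ Finset.range i,
        ∑ r ∈ Finset.range k, (2 * Wp.coeff i * z ^ r) * J (i - 1 - k + (k - 1 - r)) := by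
      have hfun : R1 = fun ζ => ∑ i ∈ Finset.range N, ∑ k ∈ Finset.range i,
          ∑ r ∈ Finset.range k,
            (2 * Wp.coeff i * z ^ r) * (w ζ * ζ ^ (i - 1 - k + (k - 1 - r))) := by
        funext ζ
        simp only [hR1def, Finset.mul_sum]
        refine Finset.sum_congr rfl fun i _ => Finset.sum_congr rfl fun k _ =>
          Finset.sum_congr rfl fun r _ => ?_
        ring
      rw [hfun, SC_cint_sum _ (fun i ζ => ∑ k ∈ Finset.range i, ∑ r ∈ Finset.range k,
          (2 * Wp.coeff i * z ^ r) * (w ζ * ζ ^ (i - 1 - k + (k - 1 - r))))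
        (fun i _ => continuousOn_finset_sum _ fun k _ =>
        continuousOn_finset_sum _ fun r _ => continuousOn_const.mul (hwc.mul (hCid.pow _)))]
      refine Finset.sum_congr rfl fun i _ => ?_
      rw [SC_cint_sum _ (fun k ζ => ∑ r ∈ Finset.range k,
          (2 * Wp.coeff i * z ^ r) * (w ζ * ζ ^ (i - 1 - k + (k - 1 - r))))
        (fun k _ => continuousOn_finset_sum _ fun r _ =>
        continuousOn_const.mul (hwc.mul (hCid.pow _)))]
      refine Finset.sum_congr rfl fun k _ => ?_
      rw [SC_cint_sum _ (fun r ζ =>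
          (2 * Wp.coeff i * z ^ r) * (w ζ * ζ ^ (i - 1 - k + (k - 1 - r))))
        (fun r _ => continuousOn_const.mul (hwc.mul (hCid.pow _)))]
      refine Finset.sum_congr rfl fun r _ => ?_
      rw [hJdef]
      exact circleIntegral.integral_const_mul _ _ 0 1
    have hR2int : (∮ ζ in C(0, 1), R2 ζ) = ∑ i ∈ Finset.range N, ∑ k ∈ Finset.range i,
        (4 * Vp.coeff i * z ^ k) * J (i - 1 - k) := by
      have hfun : R2 = fun ζ => ∑ i ∈ Finset.range N, ∑ k ∈ Finset.range i,
          (4 * Vp.coeff i * z ^ k) * (w ζ * ζ ^ (i - 1 - k)) := by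
        funext ζ
        simp only [hR2def, Finset.mul_sum]
        refine Finset.sum_congr rfl fun i _ => Finset.sum_congr rfl fun k _ => ?_
        ring
      rw [hfun, SC_cint_sum _ (fun i ζ => ∑ k ∈ Finset.range i,
          (4 * Vp.coeff i * z ^ k) * (w ζ * ζ ^ (i - 1 - k)))
        (fun i _ => continuousOn_finset_sum _ fun k _ =>
        continuousOn_const.mul (hwc.mul (hCid.pow _)))]
      refine Finset.sum_congr rfl fun i _ => ?_
      rw [SC_cint_sum _ (fun k ζ => (4 * Vp.coeff i * z ^ k) * (w ζ * ζ ^ (i - 1 - k)))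
        (fun k _ => continuousOn_const.mul (hwc.mul (hCid.pow _)))]
      refine Finset.sum_congr rfl fun k _ => ?_
      rw [hJdef]
      exact circleIntegral.integral_const_mul _ _ 0 1
    have hR3int : (∮ ζ in C(0, 1), R3 ζ) = 2 * Vp.eval z * μ0 := by
      rw [hR3def, hμdef]
      exact circleIntegral.integral_const_mul _ _ 0 1
    rw [hR1int, hR2int, hR3int]
    -- evaluate U0
    rw [hU0def]
    simp only [Polynomial.eval_add, Polynomial.eval_mul, Polynomial.eval_C,
      Polynomial.eval_finset_sum, Polynomial.eval_pow, Polynomial.eval_X]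
    have hT1 : ∑ i ∈ Finset.range N, Wp.coeff i * ∑ k ∈ Finset.range i,
        ∑ r ∈ Finset.range k, 2 * J (i - 1 - k + (k - 1 - r)) * z ^ r
        = ∑ i ∈ Finset.range N, ∑ k ∈ Finset.range i, ∑ r ∈ Finset.range k,
          (2 * Wp.coeff i * z ^ r) * J (i - 1 - k + (k - 1 - r)) := by
      simp only [Finset.mul_sum]
      refine Finset.sum_congr rfl fun i _ => Finset.sum_congr rfl fun k _ =>
        Finset.sum_congr rfl fun r _ => ?_
      ring
    have hT2 : ∑ i ∈ Finset.range N, Vp.coeff i * ∑ k ∈ Finset.range i,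
        4 * J (i - 1 - k) * z ^ k
        = ∑ i ∈ Finset.range N, ∑ k ∈ Finset.range i,
          (4 * Vp.coeff i * z ^ k) * J (i - 1 - k) := by
      simp only [Finset.mul_sum]
      refine Finset.sum_congr rfl fun i _ => Finset.sum_congr rfl fun k _ => ?_
      ring
    rw [hT1, hT2]
    ring
  linear_combination (1 / (2 * (Real.pi : ℂ) * Complex.I)) * key
end

section
/- (Bilinear residue formulae) For every n ≥ 1 and each j = 1, …, m: φ_n(z_j)·ε_n(z_j) = 2·(φ_{n+1}(0)/κ_n)·z_jⁿ·Θ_n(z_j)/(2V(z_j)); φ*_n(z_j)·ε*_n(z_j) = −2·(φ̄_{n+1}(0)/κ_n)·z_j^{n+1}·Θ*_n(z_j)/(2V(z_j)); φ_{n+1}(z_j)·ε_n(z_j) = 2·(φ_{n+1}(0)/κ_n)·z_jⁿ·(Ω_n(z_j)+V(z_j))/(2V(z_j)); and φ_n(z_j)·ε_{n+1}(z_j) = 2·(φ_{n+1}(0)/κ_n)·z_jⁿ·(Ω_n(z_j)−V(z_j))/(2V(z_j)). -/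
open Complex Polynomial Finset
open scoped Real

noncomputable def Bpair (c : ℤ → ℂ) (p q : Polynomial ℂ) : ℂ :=
  ∑ i ∈ p.support, ∑ j ∈ q.support, p.coeff i * q.coeff j * c ((i : ℤ) - (j : ℤ))

namespace Bpair

variable (c : ℤ → ℂ)

lemma eq_range (p q : Polynomial ℂ) {N M : ℕ} (hN : p.natDegree < N) (hM : q.natDegree < M) :
    Bpair c p q = ∑ i ∈ range N, ∑ j ∈ range M,
      p.coeff i * q.coeff j * c ((i : ℤ) - (j : ℤ)) := by
  unfold Bpair
  have h1 : ∀ i : ℕ, ∑ j ∈ q.support, p.coeff i * q.coeff j * c ((i : ℤ) - (j : ℤ))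
      = ∑ j ∈ range M, p.coeff i * q.coeff j * c ((i : ℤ) - (j : ℤ)) := by
    intro i
    refine Finset.sum_subset (q.supp_subset_range hM) fun j _ hj => ?_
    simp [Polynomial.notMem_support_iff.mp hj]
  calc ∑ i ∈ p.support, ∑ j ∈ q.support, p.coeff i * q.coeff j * c ((i : ℤ) - (j : ℤ))
      = ∑ i ∈ p.support, ∑ j ∈ range M, p.coeff i * q.coeff j * c ((i : ℤ) - (j : ℤ)) := by
        exact Finset.sum_congr rfl fun i _ => h1 i
    _ = _ := by
        refine Finset.sum_subset (p.supp_subset_range hN) fun i _ hi => ?_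
        simp [Polynomial.notMem_support_iff.mp hi]

lemma swap (p q : Polynomial ℂ) : Bpair c p q = Bpair (fun k => c (-k)) q p := by
  rw [eq_range c p q (Nat.lt_succ_self _) (Nat.lt_succ_self _),
      eq_range (fun k => c (-k)) q p (Nat.lt_succ_self _) (Nat.lt_succ_self _),
      Finset.sum_comm]
  refine Finset.sum_congr rfl fun i _ => Finset.sum_congr rfl fun j _ => ?_
  rw [show -((i : ℤ) - (j : ℤ)) = (j : ℤ) - (i : ℤ) by ring]
  ring

lemma add_left (p₁ p₂ q : Polynomial ℂ) :
    Bpair c (p₁ + p₂) q = Bpair c p₁ q + Bpair c p₂ q := by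
  set N := max (p₁ + p₂).natDegree (max p₁.natDegree p₂.natDegree) + 1 with hNdef
  have h0 : (p₁ + p₂).natDegree < N := by omega
  have h1 : p₁.natDegree < N := by omega
  have h2 : p₂.natDegree < N := by omega
  have hM : q.natDegree < q.natDegree + 1 := Nat.lt_succ_self _
  rw [eq_range c _ q h0 hM, eq_range c _ q h1 hM, eq_range c _ q h2 hM, ← Finset.sum_add_distrib]
  refine Finset.sum_congr rfl fun i _ => ?_
  rw [← Finset.sum_add_distrib]
  refine Finset.sum_congr rfl fun j _ => ?_
  rw [Polynomial.coeff_add]; ring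

lemma Cmul_left (a : ℂ) (p q : Polynomial ℂ) :
    Bpair c (C a * p) q = a * Bpair c p q := by
  have h0 : (C a * p).natDegree < p.natDegree + 1 :=
    Nat.lt_succ_of_le (Polynomial.natDegree_C_mul_le a p)
  rw [eq_range c _ q h0 (Nat.lt_succ_self _), eq_range c p q (Nat.lt_succ_self _) (Nat.lt_succ_self _),
      Finset.mul_sum]
  refine Finset.sum_congr rfl fun i _ => ?_
  rw [Finset.mul_sum]
  refine Finset.sum_congr rfl fun j _ => ?_
  rw [Polynomial.coeff_C_mul]; ring

lemma zero_left (q : Polynomial ℂ) : Bpair c 0 q = 0 := by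
  unfold Bpair; simp

lemma sub_left (p₁ p₂ q : Polynomial ℂ) :
    Bpair c (p₁ - p₂) q = Bpair c p₁ q - Bpair c p₂ q := by
  have := add_left c (p₁ - p₂) p₂ q
  rw [sub_add_cancel] at this
  linear_combination -this

lemma Xpow_right (p : Polynomial ℂ) (k : ℕ) :
    Bpair c p (X ^ k) = ∑ i ∈ p.support, p.coeff i * c ((i : ℤ) - (k : ℤ)) := by
  unfold Bpair
  rw [Polynomial.support_X_pow]
  refine Finset.sum_congr rfl fun i _ => ?_
  simp [Polynomial.coeff_X_pow]

lemma Xpow_right_range (p : Polynomial ℂ) (k : ℕ) {N : ℕ} (hN : p.natDegree < N) :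
    Bpair c p (X ^ k) = ∑ i ∈ range N, p.coeff i * c ((i : ℤ) - (k : ℤ)) := by
  rw [Xpow_right]
  refine Finset.sum_subset (p.supp_subset_range hN) fun i _ hi => ?_
  simp [Polynomial.notMem_support_iff.mp hi]

lemma one_right_range (p : Polynomial ℂ) {N : ℕ} (hN : p.natDegree < N) :
    Bpair c p 1 = ∑ i ∈ range N, p.coeff i * c (i : ℤ) := by
  have := Xpow_right_range c p 0 hN
  simpa using this

lemma right_decomp (p q : Polynomial ℂ) {M : ℕ} (hM : q.natDegree < M) :
    Bpair c p q = ∑ j ∈ range M, q.coeff j * Bpair c p (X ^ j) := by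
  rw [eq_range c p q (Nat.lt_succ_self _) hM, Finset.sum_comm]
  refine Finset.sum_congr rfl fun j _ => ?_
  rw [Xpow_right_range c p j (Nat.lt_succ_self _), Finset.mul_sum]
  refine Finset.sum_congr rfl fun i _ => by ring

lemma Xmul_Xpow (p : Polynomial ℂ) {k : ℕ} (hk : 1 ≤ k) :
    Bpair c (X * p) (X ^ k) = Bpair c p (X ^ (k - 1)) := by
  have hd : (X * p).natDegree < p.natDegree + 2 := by
    have := Polynomial.natDegree_mul_le (p := (X : Polynomial ℂ)) (q := p)
    have hX : (X : Polynomial ℂ).natDegree = 1 := Polynomial.natDegree_X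
    omega
  rw [Xpow_right_range c (X * p) k hd, Xpow_right_range c p (k - 1) (Nat.lt_succ_self _),
      Finset.sum_range_succ']
  have h0 : (X * p).coeff 0 = 0 := by
    rw [Polynomial.mul_coeff_zero]; simp
  rw [h0]
  simp only [Polynomial.coeff_X_mul, zero_mul, add_zero]
  refine Finset.sum_congr rfl fun i _ => ?_
  have harg : ((i + 1 : ℕ) : ℤ) - (k : ℤ) = (i : ℤ) - ((k - 1 : ℕ) : ℤ) := by omega
  rw [harg]

lemma Xmul_one_range (p : Polynomial ℂ) {N : ℕ} (hN : p.natDegree < N) :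
    Bpair c (X * p) 1 = ∑ i ∈ range N, p.coeff i * c ((i : ℤ) + 1) := by
  have hd : (X * p).natDegree < N + 1 := by
    have := Polynomial.natDegree_mul_le (p := (X : Polynomial ℂ)) (q := p)
    have hX : (X : Polynomial ℂ).natDegree = 1 := Polynomial.natDegree_X
    omega
  rw [one_right_range c (X * p) hd, Finset.sum_range_succ']
  have h0 : (X * p).coeff 0 = 0 := by
    rw [Polynomial.mul_coeff_zero]; simp
  rw [h0]
  simp only [Polynomial.coeff_X_mul, zero_mul, add_zero]
  refine Finset.sum_congr rfl fun i _ => ?_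
  have harg : ((i + 1 : ℕ) : ℤ) = (i : ℤ) + 1 := by omega
  rw [harg]

lemma natDegree_reflect_le (q : Polynomial ℂ) (n : ℕ) (hq : q.natDegree ≤ n) :
    (reflect n q).natDegree ≤ n := by
  rw [Polynomial.natDegree_le_iff_coeff_eq_zero]
  intro N hN
  rw [Polynomial.coeff_reflect, Polynomial.revAt_eq_self_of_lt hN]
  exact Polynomial.coeff_eq_zero_of_natDegree_lt (lt_of_le_of_lt hq hN)

lemma reflect_Xpow (q : Polynomial ℂ) {n k : ℕ} (hq : q.natDegree ≤ n) (hk : k ≤ n) :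
    Bpair c (reflect n q) (X ^ k) = Bpair c (X ^ (n - k)) q := by
  rw [Xpow_right_range c (reflect n q) k (Nat.lt_succ_of_le (natDegree_reflect_le q n hq))]
  have hrhs : Bpair c (X ^ (n - k)) q
      = ∑ j ∈ range (n + 1), q.coeff j * c (((n - k : ℕ) : ℤ) - (j : ℤ)) := by
    rw [eq_range c (X ^ (n - k)) q (Nat.lt_succ_of_le (Polynomial.natDegree_X_pow_le _))
        (Nat.lt_succ_of_le hq)]
    rw [Finset.sum_comm]
    refine Finset.sum_congr rfl fun j _ => ?_
    rw [Finset.sum_eq_single (n - k)]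
    · simp [Polynomial.coeff_X_pow]
    · intro i _ hi; simp [Polynomial.coeff_X_pow, hi]
    · intro h; exact absurd (Finset.mem_range.mpr (by omega)) h
  have hr2 : ∑ j ∈ range (n + 1), q.coeff j * c (((n - k : ℕ) : ℤ) - (j : ℤ))
      = ∑ j ∈ range (n + 1), q.coeff j * c ((n : ℤ) - (j : ℤ) - (k : ℤ)) := by
    refine Finset.sum_congr rfl fun j _ => ?_
    have harg : ((n - k : ℕ) : ℤ) - (j : ℤ) = (n : ℤ) - (j : ℤ) - (k : ℤ) := by omega
    rw [harg]
  rw [hrhs, hr2]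
  have := Finset.sum_range_reflect
    (fun j => q.coeff j * c ((n : ℤ) - (j : ℤ) - (k : ℤ))) (n + 1)
  rw [← this]
  refine Finset.sum_congr rfl fun i hi => ?_
  have hin : i ≤ n := Nat.lt_succ_iff.mp (Finset.mem_range.mp hi)
  rw [Polynomial.coeff_reflect, Polynomial.revAt_le hin]
  have h1 : n + 1 - 1 - i = n - i := by omega
  rw [h1]
  have harg : (n : ℤ) - ((n - i : ℕ) : ℤ) - (k : ℤ) = (i : ℤ) - (k : ℤ) := by omega
  rw [harg]

lemma reflect_Xpow_succ (q : Polynomial ℂ) {n : ℕ} (hq : q.natDegree ≤ n) :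
    Bpair c (reflect n q) (X ^ (n + 1)) = Bpair (fun k => c (-k)) (X * q) 1 := by
  rw [Xpow_right_range c (reflect n q) (n + 1) (Nat.lt_succ_of_le (natDegree_reflect_le q n hq)),
      Xmul_one_range (fun k => c (-k)) q (Nat.lt_succ_of_le hq)]
  have := Finset.sum_range_reflect
    (fun j => q.coeff j * c (-((j : ℤ) + 1))) (n + 1)
  rw [← this]
  refine Finset.sum_congr rfl fun i hi => ?_
  have hin : i ≤ n := Nat.lt_succ_iff.mp (Finset.mem_range.mp hi)
  rw [Polynomial.coeff_reflect, Polynomial.revAt_le hin]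
  have h1 : n + 1 - 1 - i = n - i := by omega
  rw [h1]
  have harg : -(((n - i : ℕ) : ℤ) + 1) = (i : ℤ) - ((n + 1 : ℕ) : ℤ) := by omega
  rw [harg]

end Bpair

namespace Bpair

lemma C_C (c : ℤ → ℂ) (a b : ℂ) : Bpair c (C a) (C b) = a * b * c 0 := by
  by_cases ha : a = 0
  · simp [ha, zero_left]
  by_cases hb : b = 0
  · subst hb
    rw [map_zero]
    unfold Bpair; simp
  rw [eq_range c (C a) (C b) (by simp [Polynomial.natDegree_C] : (C a).natDegree < 1)
      (by simp [Polynomial.natDegree_C] : (C b).natDegree < 1)]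
  simp

lemma sum_left (c : ℤ → ℂ) {ι : Type*} (s : Finset ι) (f : ι → Polynomial ℂ) (q : Polynomial ℂ) :
    Bpair c (∑ i ∈ s, f i) q = ∑ i ∈ s, Bpair c (f i) q := by
  classical
  induction s using Finset.induction_on with
  | empty => simp [zero_left]
  | insert _ _ hnot ih =>
      rw [Finset.sum_insert hnot, add_left, ih, Finset.sum_insert hnot]

end Bpair

structure MomSys (c : ℤ → ℂ) (φ φb : ℕ → Polynomial ℂ) (κ : ℕ → ℂ) : Prop where
  hκ : ∀ n, κ n ≠ 0
  hdφ : ∀ n, (φ n).natDegree = n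
  hdφb : ∀ n, (φb n).natDegree = n
  hlφ : ∀ n, (φ n).coeff n = κ n
  hlφb : ∀ n, (φb n).coeff n = κ n
  horth : ∀ m k, Bpair c (φ m) (φb k) = if m = k then 1 else 0

namespace MomSys

variable {c : ℤ → ℂ} {φ φb : ℕ → Polynomial ℂ} {κ : ℕ → ℂ}

lemma dual (h : MomSys c φ φb κ) : MomSys (fun k => c (-k)) φb φ κ where
  hκ := h.hκ
  hdφ := h.hdφb
  hdφb := h.hdφ
  hlφ := h.hlφb
  hlφb := h.hlφ
  horth := by
    intro m k
    rw [← Bpair.swap c (φ k) (φb m), h.horth]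
    simp [eq_comm]

theorem expand (h : MomSys c φ φb κ) :
    ∀ N (p : Polynomial ℂ), p.natDegree ≤ N →
      p = ∑ k ∈ range (N + 1), C (Bpair c p (φb k)) * φ k := by
  intro N
  induction N with
  | zero =>
      intro p hp
      have hφ0 : φ 0 = C (κ 0) := by
        have := Polynomial.eq_C_of_natDegree_le_zero (le_of_eq (h.hdφ 0))
        rwa [h.hlφ 0] at this
      have hφb0 : φb 0 = C (κ 0) := by
        have := Polynomial.eq_C_of_natDegree_le_zero (le_of_eq (h.hdφb 0))
        rwa [h.hlφb 0] at this
      have hpC : p = C (p.coeff 0) := Polynomial.eq_C_of_natDegree_le_zero hp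
      have horth00 := h.horth 0 0
      rw [hφ0, hφb0, Bpair.C_C] at horth00
      simp only [if_pos rfl] at horth00
      have hB : Bpair c p (C (κ 0)) = p.coeff 0 * κ 0 * c 0 := by
        conv_lhs => rw [hpC]
        exact Bpair.C_C c _ _
      rw [Finset.sum_range_one, hφb0, hB, hφ0, ← Polynomial.C_mul]
      conv_lhs => rw [hpC]
      congr 1
      calc p.coeff 0 = p.coeff 0 * (κ 0 * κ 0 * c 0) := by rw [horth00]; simp
        _ = p.coeff 0 * κ 0 * c 0 * κ 0 := by ring
  | succ N ih =>
      intro p hp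
      set lam := p.coeff (N + 1) / κ (N + 1) with hlam
      set q := p - C lam * φ (N + 1) with hqdef
      have hcoeff : q.coeff (N + 1) = 0 := by
        rw [hqdef, Polynomial.coeff_sub, Polynomial.coeff_C_mul, h.hlφ (N + 1), hlam,
            div_mul_cancel₀ _ (h.hκ (N + 1)), sub_self]
      have hq : q.natDegree ≤ N := by
        rw [Polynomial.natDegree_le_iff_coeff_eq_zero]
        intro M hM
        rcases Nat.lt_or_ge (N + 1) M with hM2 | hM2
        · rw [hqdef, Polynomial.coeff_sub, Polynomial.coeff_C_mul]
          rw [Polynomial.coeff_eq_zero_of_natDegree_lt (lt_of_le_of_lt hp hM2),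
              Polynomial.coeff_eq_zero_of_natDegree_lt (by rw [h.hdφ]; exact hM2)]
          ring
        · have : M = N + 1 := by omega
          rw [this]; exact hcoeff
      have hqe := ih q hq
      have hps : p = q + C lam * φ (N + 1) := by rw [hqdef]; ring
      have hBk : ∀ k, k ≤ N → Bpair c p (φb k) = Bpair c q (φb k) := by
        intro k hk
        rw [hps, Bpair.add_left, Bpair.Cmul_left, h.horth]
        rw [if_neg (by omega)]
        ring
      have hBtop : Bpair c p (φb (N + 1)) = lam := by
        rw [hps, Bpair.add_left, Bpair.Cmul_left, h.horth, if_pos rfl]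
        have : Bpair c q (φb (N + 1)) = 0 := by
          conv_lhs => rw [hqe]
          rw [Bpair.sum_left]
          refine Finset.sum_eq_zero fun k hk => ?_
          rw [Bpair.Cmul_left, h.horth, if_neg (by
            have := Finset.mem_range.mp hk; omega)]
          ring
        rw [this]; ring
      rw [Finset.sum_range_succ, hBtop]
      conv_lhs => rw [hps, hqe]
      rw [add_left_inj]
      exact Finset.sum_congr rfl fun k hk => by
        rw [hBk k (Nat.lt_succ_iff.mp (Finset.mem_range.mp hk))]

theorem vanish (h : MomSys c φ φb κ) {p : Polynomial ℂ} {N k : ℕ}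
    (hp : p.natDegree ≤ N) (hk : N < k) : Bpair c p (φb k) = 0 := by
  conv_lhs => rw [h.expand N p hp]
  rw [Bpair.sum_left]
  refine Finset.sum_eq_zero fun j hj => ?_
  rw [Bpair.Cmul_left, h.horth, if_neg (by have := Finset.mem_range.mp hj; omega)]
  ring

lemma neg_neg_fun : (fun k : ℤ => c (- -k)) = c := by funext k; rw [neg_neg]

theorem O1a (h : MomSys c φ φb κ) {m k : ℕ} (hk : k < m) : Bpair c (φ m) (X ^ k) = 0 := by
  have hdv := h.dual.vanish (p := X ^ k) (N := k) (k := m) (Polynomial.natDegree_X_pow_le _) hk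
  rw [Bpair.swap] at hdv
  rwa [neg_neg_fun] at hdv

theorem O1b (h : MomSys c φ φb κ) (m : ℕ) : κ m * Bpair c (φ m) (X ^ m) = 1 := by
  have hexp := h.dual.expand m (X ^ m) (Polynomial.natDegree_X_pow_le _)
  have hco := congrArg (fun p : Polynomial ℂ => p.coeff m) hexp
  simp only [Polynomial.coeff_X_pow, if_pos rfl, Polynomial.finset_sum_coeff,
    Polynomial.coeff_C_mul] at hco
  rw [Finset.sum_range_succ] at hco
  have hzero : ∀ j ∈ range m, Bpair (fun k => c (-k)) (X ^ m) (φ j) * (φb j).coeff m = 0 := by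
    intro j hj
    rw [Polynomial.coeff_eq_zero_of_natDegree_lt
      (by rw [h.hdφb]; exact Finset.mem_range.mp hj)]
    ring
  rw [Finset.sum_eq_zero hzero, zero_add, h.hlφb] at hco
  rw [Bpair.swap (fun k => c (-k)) (X ^ m) (φ m), neg_neg_fun] at hco
  · rw [mul_comm]; exact hco.symm

/-- The kernel lemma: a polynomial of degree ≤ n pairing to zero with `X^1,…,X^n`. -/
theorem kernel (h : MomSys c φ φb κ) {n : ℕ} {p : Polynomial ℂ}
    (hp : p.natDegree ≤ n) (hv : ∀ k, 1 ≤ k → k ≤ n → Bpair c p (X ^ k) = 0) :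
    p = C (Bpair c p 1) * ∑ k ∈ range (n + 1), C ((φb k).coeff 0) * φ k := by
  have hexp := h.expand n p hp
  conv_lhs => rw [hexp]
  rw [Finset.mul_sum]
  refine Finset.sum_congr rfl fun k hk => ?_
  have hkn : k ≤ n := Nat.lt_succ_iff.mp (Finset.mem_range.mp hk)
  have hdec := Bpair.right_decomp c p (φb k) (M := k + 1) (by rw [h.hdφb]; omega)
  have hsum : Bpair c p (φb k) = (φb k).coeff 0 * Bpair c p 1 := by
    rw [hdec, Finset.sum_range_succ']
    have hzero : ∀ j ∈ range k, (φb k).coeff (j + 1) * Bpair c p (X ^ (j + 1)) = 0 := by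
      intro j hj
      rw [hv (j + 1) (by omega) (by have := Finset.mem_range.mp hj; omega)]
      ring
    rw [Finset.sum_eq_zero hzero, zero_add, pow_zero]
  rw [hsum, ← mul_assoc, ← Polynomial.C_mul, mul_comm (Bpair c p 1)]

/-- `φ*_n`, the reflected dual polynomial. -/
theorem phistar_coeff_zero (h : MomSys c φ φb κ) (n : ℕ) :
    (reflect n (φb n)).coeff 0 = κ n := by
  rw [Polynomial.coeff_reflect, Polynomial.revAt_le (Nat.zero_le n), Nat.sub_zero, h.hlφb]

theorem phistar_natDegree_le (h : MomSys c φ φb κ) (n : ℕ) :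
    (reflect n (φb n)).natDegree ≤ n :=
  Bpair.natDegree_reflect_le _ _ (le_of_eq (h.hdφb n))

theorem phistar_vanish (h : MomSys c φ φb κ) {n k : ℕ} (h1 : 1 ≤ k) (hkn : k ≤ n) :
    Bpair c (reflect n (φb n)) (X ^ k) = 0 := by
  rw [Bpair.reflect_Xpow c (φb n) (le_of_eq (h.hdφb n)) hkn]
  exact h.vanish (Polynomial.natDegree_X_pow_le _) (by omega)

theorem phistar_one (h : MomSys c φ φb κ) (n : ℕ) :
    κ n * Bpair c (reflect n (φb n)) 1 = 1 := by
  have h0 : Bpair c (reflect n (φb n)) 1 = Bpair c (X ^ (n - 0)) (φb n) := by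
    rw [← pow_zero (X : Polynomial ℂ)]
    exact Bpair.reflect_Xpow c (φb n) (le_of_eq (h.hdφb n)) (Nat.zero_le n)
  rw [h0, Nat.sub_zero]
  have := h.dual.O1b n
  rw [Bpair.swap (fun k => c (-k)) (φb n) (X ^ n), neg_neg_fun] at this
  exact this

/-- The expansion set `E_n = Σ φb_k(0) φ_k` equals `κ_n · φ*_n`. -/
theorem Eset (h : MomSys c φ φb κ) (n : ℕ) :
    (∑ k ∈ range (n + 1), C ((φb k).coeff 0) * φ k) = C (κ n) * reflect n (φb n) := by
  have hker := h.kernel (p := reflect n (φb n)) (h.phistar_natDegree_le n)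
    (fun k h1 hk => h.phistar_vanish h1 hk)
  have := congrArg (fun p => C (κ n) * p) hker
  rw [this, ← mul_assoc, ← Polynomial.C_mul, h.phistar_one n, Polynomial.C_1, one_mul]

/-- Szegő-type recurrence for `φ`. -/
theorem recA (h : MomSys c φ φb κ) (n : ℕ) :
    C (κ n) * φ (n + 1)
      = C (κ (n + 1)) * (X * φ n) + C ((φ (n + 1)).coeff 0) * reflect n (φb n) := by
  set r := C (κ n) * φ (n + 1) - C (κ (n + 1)) * (X * φ n)
    - C ((φ (n + 1)).coeff 0) * reflect n (φb n) with hrdef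
  have hXφd : (X * φ n).natDegree ≤ n + 1 := by
    have := Polynomial.natDegree_mul_le (p := (X : Polynomial ℂ)) (q := φ n)
    have hX : (X : Polynomial ℂ).natDegree = 1 := Polynomial.natDegree_X
    have := h.hdφ n
    omega
  have hrd : r.natDegree ≤ n := by
    rw [Polynomial.natDegree_le_iff_coeff_eq_zero]
    intro M hM
    rw [hrdef]
    simp only [Polynomial.coeff_sub, Polynomial.coeff_C_mul]
    rcases Nat.lt_or_ge (n + 1) M with hM2 | hM2
    · rw [Polynomial.coeff_eq_zero_of_natDegree_lt (by rw [h.hdφ]; omega),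
          Polynomial.coeff_eq_zero_of_natDegree_lt (lt_of_le_of_lt hXφd hM2),
          Polynomial.coeff_eq_zero_of_natDegree_lt
            (lt_of_le_of_lt (h.phistar_natDegree_le n) (by omega))]
      ring
    · have hMeq : M = n + 1 := by omega
      subst hMeq
      rw [h.hlφ (n + 1), Polynomial.coeff_X_mul, h.hlφ n,
          Polynomial.coeff_eq_zero_of_natDegree_lt
            (lt_of_le_of_lt (h.phistar_natDegree_le n) (by omega))]
      ring
  have hrv : ∀ k, 1 ≤ k → k ≤ n → Bpair c r (X ^ k) = 0 := by
    intro k h1 hk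
    rw [hrdef, Bpair.sub_left, Bpair.sub_left, Bpair.Cmul_left, Bpair.Cmul_left,
        Bpair.Cmul_left, h.O1a (by omega), Bpair.Xmul_Xpow c (φ n) h1,
        h.O1a (by omega : k - 1 < n), h.phistar_vanish h1 hk]
    ring
  have hker := h.kernel hrd hrv
  rw [h.Eset n] at hker
  have hev := congrArg (fun p : Polynomial ℂ => Polynomial.eval 0 p) hker
  simp only [Polynomial.eval_mul, Polynomial.eval_C] at hev
  have hre : Polynomial.eval 0 (reflect n (φb n)) = κ n := by
    rw [← Polynomial.coeff_zero_eq_eval_zero, h.phistar_coeff_zero n]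
  have hev0 : Polynomial.eval 0 r = 0 := by
    rw [hrdef]
    simp only [Polynomial.eval_sub, Polynomial.eval_mul, Polynomial.eval_C, Polynomial.eval_X]
    rw [hre, ← Polynomial.coeff_zero_eq_eval_zero]
    ring
  rw [hev0, hre] at hev
  have hB0 : Bpair c r 1 = 0 := by
    rcases mul_eq_zero.mp hev.symm with h1 | h2
    · exact h1
    · exact absurd h2 (mul_ne_zero (h.hκ n) (h.hκ n))
  rw [hB0, Polynomial.C_0, zero_mul] at hker
  have : C (κ n) * φ (n + 1) - C (κ (n + 1)) * (X * φ n)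
      - C ((φ (n + 1)).coeff 0) * reflect n (φb n) = 0 := hker
  linear_combination (norm := ring_nf) this

/-- Szegő-type recurrence for `φ*`. -/
theorem recB (h : MomSys c φ φb κ) (n : ℕ) :
    C (κ n) * reflect (n + 1) (φb (n + 1))
      = C (κ (n + 1)) * reflect n (φb n) + C ((φb (n + 1)).coeff 0) * (X * φ n) := by
  set r := C (κ n) * reflect (n + 1) (φb (n + 1)) - C (κ (n + 1)) * reflect n (φb n)
    - C ((φb (n + 1)).coeff 0) * (X * φ n) with hrdef
  have hXφd : (X * φ n).natDegree ≤ n + 1 := by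
    have := Polynomial.natDegree_mul_le (p := (X : Polynomial ℂ)) (q := φ n)
    have hX : (X : Polynomial ℂ).natDegree = 1 := Polynomial.natDegree_X
    have := h.hdφ n
    omega
  have hs1 : (reflect (n + 1) (φb (n + 1))).coeff (n + 1) = (φb (n + 1)).coeff 0 := by
    rw [Polynomial.coeff_reflect, Polynomial.revAt_le (le_refl (n + 1)), Nat.sub_self]
  have hrd : r.natDegree ≤ n := by
    rw [Polynomial.natDegree_le_iff_coeff_eq_zero]
    intro M hM
    rw [hrdef]
    simp only [Polynomial.coeff_sub, Polynomial.coeff_C_mul]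
    rcases Nat.lt_or_ge (n + 1) M with hM2 | hM2
    · rw [Polynomial.coeff_eq_zero_of_natDegree_lt
            (lt_of_le_of_lt (h.phistar_natDegree_le (n + 1)) hM2),
          Polynomial.coeff_eq_zero_of_natDegree_lt (lt_of_le_of_lt hXφd hM2),
          Polynomial.coeff_eq_zero_of_natDegree_lt
            (lt_of_le_of_lt (h.phistar_natDegree_le n) (by omega))]
      ring
    · have hMeq : M = n + 1 := by omega
      subst hMeq
      rw [hs1, Polynomial.coeff_X_mul, h.hlφ n,
          Polynomial.coeff_eq_zero_of_natDegree_lt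
            (lt_of_le_of_lt (h.phistar_natDegree_le n) (by omega))]
      ring
  have hrv : ∀ k, 1 ≤ k → k ≤ n → Bpair c r (X ^ k) = 0 := by
    intro k h1 hk
    rw [hrdef, Bpair.sub_left, Bpair.sub_left, Bpair.Cmul_left, Bpair.Cmul_left,
        Bpair.Cmul_left, h.phistar_vanish h1 (by omega : k ≤ n + 1),
        h.phistar_vanish h1 hk, Bpair.Xmul_Xpow c (φ n) h1, h.O1a (by omega : k - 1 < n)]
    ring
  have hker := h.kernel hrd hrv
  rw [h.Eset n] at hker
  have hev := congrArg (fun p : Polynomial ℂ => Polynomial.eval 0 p) hker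
  simp only [Polynomial.eval_mul, Polynomial.eval_C] at hev
  have hre : ∀ m, Polynomial.eval 0 (reflect m (φb m)) = κ m := by
    intro m
    rw [← Polynomial.coeff_zero_eq_eval_zero, h.phistar_coeff_zero m]
  have hev0 : Polynomial.eval 0 r = 0 := by
    rw [hrdef]
    simp only [Polynomial.eval_sub, Polynomial.eval_mul, Polynomial.eval_C, Polynomial.eval_X]
    rw [hre, hre]
    ring
  rw [hev0, hre] at hev
  have hB0 : Bpair c r 1 = 0 := by
    rcases mul_eq_zero.mp hev.symm with h1 | h2
    · exact h1
    · exact absurd h2 (mul_ne_zero (h.hκ n) (h.hκ n))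
  rw [hB0, Polynomial.C_0, zero_mul] at hker
  have : C (κ n) * reflect (n + 1) (φb (n + 1)) - C (κ (n + 1)) * reflect n (φb n)
      - C ((φb (n + 1)).coeff 0) * (X * φ n) = 0 := hker
  linear_combination (norm := ring_nf) this

/-- The value `s_n = M(ζ φ_n)`. -/
theorem sval (h : MomSys c φ φb κ) (n : ℕ) :
    κ n * κ (n + 1) * Bpair c (X * φ n) 1 = -(φ (n + 1)).coeff 0 := by
  have hA := congrArg (fun p => Bpair c p 1) (h.recA n)
  simp only [Bpair.add_left, Bpair.Cmul_left] at hA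
  have h1 : Bpair c (φ (n + 1)) 1 = 0 := by
    have := h.O1a (m := n + 1) (k := 0) (by omega)
    rwa [pow_zero] at this
  rw [h1] at hA
  have h2 := h.phistar_one n
  linear_combination (-(κ n)) * hA + (-((φ (n + 1)).coeff 0)) * h2

/-- The value `t_n`. -/
theorem tval (h : MomSys c φ φb κ) (n : ℕ) :
    κ n * κ (n + 1) * Bpair c (reflect n (φb n)) (X ^ (n + 1)) = -(φb (n + 1)).coeff 0 := by
  rw [Bpair.reflect_Xpow_succ c (φb n) (le_of_eq (h.hdφb n))]
  exact h.dual.sval n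

/-- The κ-relation `κ_{n+1}² = κ_n² + φ_{n+1}(0) φb_{n+1}(0)`. -/
theorem krel (h : MomSys c φ φb κ) (n : ℕ) :
    κ (n + 1) ^ 2 = κ n ^ 2 + (φ (n + 1)).coeff 0 * (φb (n + 1)).coeff 0 := by
  have hA := congrArg (fun p => Bpair c p (X ^ (n + 1))) (h.recA n)
  simp only [Bpair.add_left, Bpair.Cmul_left] at hA
  rw [Bpair.Xmul_Xpow c (φ n) (by omega : 1 ≤ n + 1)] at hA
  have hsimp : (n + 1 - 1) = n := by omega
  rw [hsimp] at hA
  have h1 := h.O1b (n + 1)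
  have h2 := h.O1b n
  have h3 := h.tval n
  -- hA : κ n * B(φ (n+1), X^(n+1)) = κ (n+1) * B(φ n, X^n) + b * t
  linear_combination (-(κ n * κ (n + 1))) * hA + (κ n ^ 2) * h1
    + (-(κ (n + 1) ^ 2)) * h2 + (-((φ (n + 1)).coeff 0)) * h3

end MomSys

/-! ### Second-kind values at a fixed point -/

noncomputable def Dz (z : ℂ) (p : Polynomial ℂ) : Polynomial ℂ :=
  (p - C (p.eval z)) /ₘ (X - C z)

lemma Dz_spec (z : ℂ) (p : Polynomial ℂ) :
    (X - C z) * Dz z p = p - C (p.eval z) := by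
  unfold Dz
  rw [Polynomial.mul_divByMonic_eq_iff_isRoot]
  simp [Polynomial.IsRoot]

lemma Dz_unique (z : ℂ) (p q : Polynomial ℂ)
    (hq : (X - C z) * q = p - C (p.eval z)) : q = Dz z p := by
  have h2 := Dz_spec z p
  have : (X - C z) * q = (X - C z) * Dz z p := by rw [hq, h2]
  exact mul_left_cancel₀ (Polynomial.X_sub_C_ne_zero z) this

noncomputable def om (c : ℤ → ℂ) (z : ℂ) (p : Polynomial ℂ) : ℂ :=
  Bpair c ((X + C z) * Dz z p) 1

lemma Dz_C (z : ℂ) (a : ℂ) : Dz z (C a) = 0 := by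
  symm; apply Dz_unique; simp

lemma om_C (c : ℤ → ℂ) (z : ℂ) (a : ℂ) : om c z (C a) = 0 := by
  unfold om
  rw [Dz_C, mul_zero, Bpair.zero_left]

lemma Dz_add (z : ℂ) (p q : Polynomial ℂ) : Dz z (p + q) = Dz z p + Dz z q := by
  symm; apply Dz_unique
  rw [mul_add, Dz_spec, Dz_spec]
  simp only [Polynomial.eval_add, map_add]
  ring

lemma Dz_Cmul (z : ℂ) (a : ℂ) (p : Polynomial ℂ) : Dz z (C a * p) = C a * Dz z p := by
  symm; apply Dz_unique
  rw [show (X - C z) * (C a * Dz z p) = C a * ((X - C z) * Dz z p) by ring, Dz_spec]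
  simp only [Polynomial.eval_mul, Polynomial.eval_C, map_mul]
  ring

lemma om_add (c : ℤ → ℂ) (z : ℂ) (p q : Polynomial ℂ) :
    om c z (p + q) = om c z p + om c z q := by
  unfold om
  rw [Dz_add, mul_add, Bpair.add_left]

lemma om_Cmul (c : ℤ → ℂ) (z : ℂ) (a : ℂ) (p : Polynomial ℂ) :
    om c z (C a * p) = a * om c z p := by
  unfold om
  rw [Dz_Cmul, show (X + C z) * (C a * Dz z p) = C a * ((X + C z) * Dz z p) by ring,
      Bpair.Cmul_left]

lemma Dz_Xmul_poly (z : ℂ) (p : Polynomial ℂ) :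
    (X + C z) * Dz z (X * p) = X * p + C z * p + C z * ((X + C z) * Dz z p) := by
  have h1 := Dz_spec z (X * p)
  rw [Polynomial.eval_mul, Polynomial.eval_X, map_mul] at h1
  have h2 := Dz_spec z p
  apply mul_left_cancel₀ (Polynomial.X_sub_C_ne_zero z)
  linear_combination (X + C z) * h1 - (C z * (X + C z)) * h2

lemma om_Xmul (c : ℤ → ℂ) (z : ℂ) (p : Polynomial ℂ) :
    om c z (X * p) = Bpair c (X * p) 1 + z * Bpair c p 1 + z * om c z p := by
  unfold om
  rw [Dz_Xmul_poly, Bpair.add_left, Bpair.add_left, Bpair.Cmul_left, Bpair.Cmul_left]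

namespace MomSys

variable {c : ℤ → ℂ} {φ φb : ℕ → Polynomial ℂ} {κ : ℕ → ℂ}

/-- The fundamental bilinear induction: `κ_n (φ*_n ω_n - φ_n ω*_n) = 2 κ_n z^n - φ_n(z)`. -/
theorem Etilde (h : MomSys c φ φb κ) (z : ℂ) :
    ∀ n : ℕ, 1 ≤ n →
      κ n * ((reflect n (φb n)).eval z * om c z (φ n)
        - (φ n).eval z * om c z (reflect n (φb n)))
      = 2 * κ n * z ^ n - (φ n).eval z := by
  have key : ∀ n : ℕ,
      κ n ^ 2 * ((reflect (n+1) (φb (n+1))).eval z * om c z (φ (n+1))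
          - (φ (n+1)).eval z * om c z (reflect (n+1) (φb (n+1))))
        = κ n ^ 2 * (z * ((reflect n (φb n)).eval z * om c z (φ n)
            - (φ n).eval z * om c z (reflect n (φb n)))
          + (Bpair c (X * φ n) 1 + z * Bpair c (φ n) 1) * (reflect n (φb n)).eval z) := by
    intro n
    have e1 := congrArg (fun p : Polynomial ℂ => p.eval z) (h.recA n)
    have e2 := congrArg (fun p : Polynomial ℂ => p.eval z) (h.recB n)
    simp only [Polynomial.eval_add, Polynomial.eval_mul, Polynomial.eval_C,
      Polynomial.eval_X] at e1 e2
    have e3 := congrArg (fun p : Polynomial ℂ => om c z p) (h.recA n)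
    have e4 := congrArg (fun p : Polynomial ℂ => om c z p) (h.recB n)
    simp only [om_add, om_Cmul, om_Xmul c z (φ n)] at e3 e4
    have hk := h.krel n
    have p1 : (κ n * (reflect (n+1) (φb (n+1))).eval z) * (κ n * om c z (φ (n+1)))
        = (κ (n+1) * (reflect n (φb n)).eval z + (φb (n+1)).coeff 0 * (z * (φ n).eval z))
          * (κ (n+1) * (Bpair c (X * φ n) 1 + z * Bpair c (φ n) 1 + z * om c z (φ n))
            + (φ (n+1)).coeff 0 * om c z (reflect n (φb n))) := by
      rw [← e2, ← e3]
    have p2 : (κ n * (φ (n+1)).eval z) * (κ n * om c z (reflect (n+1) (φb (n+1))))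
        = (κ (n+1) * (z * (φ n).eval z) + (φ (n+1)).coeff 0 * (reflect n (φb n)).eval z)
          * (κ (n+1) * om c z (reflect n (φb n))
            + (φb (n+1)).coeff 0 * (Bpair c (X * φ n) 1 + z * Bpair c (φ n) 1
              + z * om c z (φ n))) := by
      rw [← e1, ← e4]
    linear_combination p1 - p2 + (z * ((reflect n (φb n)).eval z * om c z (φ n)
      - (φ n).eval z * om c z (reflect n (φb n)))
      + (Bpair c (X * φ n) 1 + z * Bpair c (φ n) 1) * (reflect n (φb n)).eval z) * hk
  intro n hn
  induction n with
  | zero => omega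
  | succ N ih =>
      have hkey := key N
      have hκN : κ N ≠ 0 := h.hκ N
      have hκκ : κ N ^ 2 ≠ 0 := pow_ne_zero 2 hκN
      have hkey2 := mul_left_cancel₀ hκκ hkey
      have hS := h.sval N
      have e1 := congrArg (fun p : Polynomial ℂ => p.eval z) (h.recA N)
      simp only [Polynomial.eval_add, Polynomial.eval_mul, Polynomial.eval_C,
        Polynomial.eval_X] at e1
      rcases Nat.eq_zero_or_pos N with hN0 | hNge
      · subst hN0
        have hφ0C : φ 0 = C (κ 0) := by
          have := Polynomial.eq_C_of_natDegree_le_zero (le_of_eq (h.hdφ 0))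
          rwa [h.hlφ 0] at this
        have hrφb0 : reflect 0 (φb 0) = C (κ 0) := by
          have h0 : φb 0 = C (κ 0) := by
            have := Polynomial.eq_C_of_natDegree_le_zero (le_of_eq (h.hdφb 0))
            rwa [h.hlφb 0] at this
          rw [h0]; simp
        have hO0 : om c z (φ 0) = 0 := by rw [hφ0C]; exact om_C c z _
        have hOs0 : om c z (reflect 0 (φb 0)) = 0 := by rw [hrφb0]; exact om_C c z _
        have hP0 : (φ 0).eval z = κ 0 := by rw [hφ0C, Polynomial.eval_C]
        have hPs0 : (reflect 0 (φb 0)).eval z = κ 0 := by rw [hrφb0, Polynomial.eval_C]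
        rw [hO0, hOs0, hP0, hPs0] at hkey2
        rw [hP0, hPs0] at e1
        have hD : κ 0 * Bpair c (φ 0) 1 = 1 := by
          have := h.O1b 0
          rwa [pow_zero] at this
        have hgoal2 : κ 0 * (κ (0+1) * ((reflect (0+1) (φb (0+1))).eval z * om c z (φ (0+1))
              - (φ (0+1)).eval z * om c z (reflect (0+1) (φb (0+1)))))
            = κ 0 * (2 * κ (0+1) * z ^ (0+1) - (φ (0+1)).eval z) := by
          rw [hkey2]
          linear_combination κ 0 * hS + (κ 0 * κ 1 * z) * hD + e1
        exact mul_left_cancel₀ (h.hκ 0) hgoal2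
      · have ihN := ih hNge
        have hD : Bpair c (φ N) 1 = 0 := by
          have := h.O1a (m := N) (k := 0) (by omega)
          rwa [pow_zero] at this
        rw [hD] at hkey2
        have hgoal2 : κ N * (κ (N + 1) * ((reflect (N+1) (φb (N+1))).eval z
              * om c z (φ (N+1)) - (φ (N+1)).eval z * om c z (reflect (N+1) (φb (N+1)))))
            = κ N * (2 * κ (N + 1) * z ^ (N + 1) - (φ (N+1)).eval z) := by
          rw [hkey2]
          linear_combination (κ (N + 1) * z) * ihN + (reflect N (φb N)).eval z * hS + e1
        exact mul_left_cancel₀ hκN hgoal2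

end MomSys

namespace MomSys

variable {c : ℤ → ℂ} {φ φb : ℕ → Polynomial ℂ} {κ : ℕ → ℂ}

/-- The Casoratian identity for second-kind values:
`φ_{n+1}(z) ω_n(z) - φ_n(z) ω_{n+1}(z) = 2 (φ_{n+1}(0)/κ_n) z^n` for `n ≥ 1`. -/
theorem casoratian (h : MomSys c φ φb κ) (z : ℂ) {n : ℕ} (hn : 1 ≤ n) :
    (φ (n + 1)).eval z * om c z (φ n) - (φ n).eval z * om c z (φ (n + 1))
      = 2 * ((φ (n + 1)).coeff 0 / κ n) * z ^ n := by
  have hκn : κ n ≠ 0 := h.hκ n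
  have hE := h.Etilde z n hn
  have hS := h.sval n
  have hD : Bpair c (φ n) 1 = 0 := by
    have := h.O1a (m := n) (k := 0) (by omega)
    rwa [pow_zero] at this
  have e1 := congrArg (fun p : Polynomial ℂ => p.eval z) (h.recA n)
  simp only [Polynomial.eval_add, Polynomial.eval_mul, Polynomial.eval_C,
    Polynomial.eval_X] at e1
  have e3 := congrArg (fun p : Polynomial ℂ => om c z p) (h.recA n)
  simp only [om_add, om_Cmul, om_Xmul c z (φ n)] at e3
  rw [hD] at e3
  have hgoal2 : κ n ^ 2 * ((φ (n + 1)).eval z * om c z (φ n)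
        - (φ n).eval z * om c z (φ (n + 1)))
      = κ n ^ 2 * (2 * ((φ (n + 1)).coeff 0 / κ n) * z ^ n) := by
    have hdiv : κ n ^ 2 * (2 * ((φ (n + 1)).coeff 0 / κ n) * z ^ n)
        = 2 * (φ (n + 1)).coeff 0 * κ n * z ^ n := by
      field_simp
    rw [hdiv]
    linear_combination (κ n * om c z (φ n)) * e1 - (κ n * (φ n).eval z) * e3
      + (φ (n + 1)).coeff 0 * hE - ((φ n).eval z) * hS
  exact mul_left_cancel₀ (pow_ne_zero 2 hκn) hgoal2

end MomSys

/-! ### Analytic layer -/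

open Metric Set

noncomputable def momf (w : ℂ → ℂ) : ℤ → ℂ := fun k =>
  (1 / (2 * Real.pi * Complex.I)) * ∮ ζ in C(0, 1), w ζ * ζ ^ k / ζ

lemma sphere_ne_zero' {ζ : ℂ} (hζ : ζ ∈ sphere (0 : ℂ) 1) : ζ ≠ 0 := by
  intro h
  rw [mem_sphere_zero_iff_norm, h] at hζ
  simp at hζ

lemma circleIntegrable_smul {f : ℂ → ℂ} (h : CircleIntegrable f 0 1) (a : ℂ) :
    CircleIntegrable (fun ζ => a • f ζ) 0 1 := by
  unfold CircleIntegrable at *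
  exact h.smul a

lemma circleIntegrable_finset_sum {ι : Type*} (s : Finset ι) (f : ι → ℂ → ℂ)
    (hf : ∀ i ∈ s, CircleIntegrable (f i) 0 1) :
    CircleIntegrable (fun ζ => ∑ i ∈ s, f i ζ) 0 1 := by
  classical
  induction s using Finset.induction_on with
  | empty => simpa using circleIntegrable_const (0 : ℂ) (0 : ℂ) 1
  | @insert a s ha ih =>
      have h1 : CircleIntegrable (f a) 0 1 := hf a (Finset.mem_insert_self a s)
      have h2 := ih fun i hi => hf i (Finset.mem_insert_of_mem hi)
      have := h1.add h2
      unfold CircleIntegrable at *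
      simpa [Finset.sum_insert ha] using this

lemma circleIntegral_add' {f g : ℂ → ℂ} (hf : CircleIntegrable f 0 1)
    (hg : CircleIntegrable g 0 1) :
    (∮ ζ in C(0, 1), (f ζ + g ζ)) = (∮ ζ in C(0, 1), f ζ) + ∮ ζ in C(0, 1), g ζ := by
  simp only [circleIntegral, smul_add]
  rw [intervalIntegral.integral_add hf.out hg.out]

lemma circleIntegral_finset_sum {ι : Type*} (s : Finset ι) (f : ι → ℂ → ℂ)
    (hf : ∀ i ∈ s, CircleIntegrable (f i) 0 1) :
    (∮ ζ in C(0, 1), ∑ i ∈ s, f i ζ) = ∑ i ∈ s, ∮ ζ in C(0, 1), f i ζ := by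
  simp only [circleIntegral, Finset.smul_sum]
  rw [intervalIntegral.integral_finset_sum (fun i hi => (hf i hi).out)]

section WeightLayer

variable {w : ℂ → ℂ}

lemma wmul_integrable (hwc : ContinuousOn w (sphere (0 : ℂ) 1))
    {f : ℂ → ℂ} (hf : ContinuousOn f (sphere (0 : ℂ) 1)) :
    CircleIntegrable (fun ζ => w ζ * f ζ) 0 1 :=
  ContinuousOn.circleIntegrable (by norm_num) (hwc.mul hf)

lemma zpow_div_cont (k : ℤ) : ContinuousOn (fun ζ : ℂ => ζ ^ k / ζ) (sphere (0 : ℂ) 1) := by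
  intro ζ hζ
  have hζ0 : ζ ≠ 0 := sphere_ne_zero' hζ
  exact ((continuousAt_zpow₀ ζ k (Or.inl hζ0)).div continuousAt_id hζ0).continuousWithinAt

lemma mom_integrable (hwc : ContinuousOn w (sphere (0 : ℂ) 1)) (k : ℤ) :
    CircleIntegrable (fun ζ => w ζ * ζ ^ k / ζ) 0 1 := by
  have := wmul_integrable hwc (zpow_div_cont k)
  simpa [mul_div_assoc] using this

lemma integralPair (hwc : ContinuousOn w (sphere (0 : ℂ) 1)) (p q : Polynomial ℂ) :
    (1 / (2 * Real.pi * Complex.I)) *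
      (∮ ζ in C(0, 1), w ζ * p.eval ζ * q.eval ζ⁻¹ / ζ)
    = Bpair (momf w) p q := by
  have heq : EqOn (fun ζ : ℂ => w ζ * p.eval ζ * q.eval ζ⁻¹ / ζ)
      (fun ζ : ℂ => ∑ i ∈ p.support, ∑ j ∈ q.support,
        (p.coeff i * q.coeff j) • (w ζ * ζ ^ ((i : ℤ) - (j : ℤ)) / ζ)) (sphere (0 : ℂ) 1) := by
    intro ζ hζ
    have hζ0 : ζ ≠ 0 := sphere_ne_zero' hζ
    have hpow : ∀ i j : ℕ, (ζ : ℂ) ^ ((i : ℤ) - (j : ℤ)) = ζ ^ i * (ζ⁻¹) ^ j := by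
      intro i j
      rw [zpow_sub₀ hζ0, zpow_natCast, zpow_natCast, div_eq_mul_inv, inv_pow]
    simp only
    rw [Polynomial.eval_eq_sum, Polynomial.sum_def, Polynomial.eval_eq_sum, Polynomial.sum_def]
    rw [Finset.mul_sum, Finset.sum_div, Finset.sum_comm]
    refine Finset.sum_congr rfl fun j _ => ?_
    rw [Finset.mul_sum, Finset.sum_mul, Finset.sum_div]
    refine Finset.sum_congr rfl fun i _ => ?_
    rw [smul_eq_mul, hpow i j]
    ring
  rw [circleIntegral.integral_congr (by norm_num) heq]
  have hint : ∀ i ∈ p.support, CircleIntegrable (fun ζ : ℂ => ∑ j ∈ q.support,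
      (p.coeff i * q.coeff j) • (w ζ * ζ ^ ((i : ℤ) - (j : ℤ)) / ζ)) 0 1 := by
    intro i _
    refine circleIntegrable_finset_sum _ _ fun j _ => ?_
    exact circleIntegrable_smul (mom_integrable hwc _) _
  rw [circleIntegral_finset_sum _ _ hint]
  unfold Bpair
  rw [Finset.mul_sum]
  refine Finset.sum_congr rfl fun i _ => ?_
  have hintj : ∀ j ∈ q.support, CircleIntegrable
      (fun ζ : ℂ => (p.coeff i * q.coeff j) • (w ζ * ζ ^ ((i : ℤ) - (j : ℤ)) / ζ)) 0 1 :=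
    fun j _ => circleIntegrable_smul (mom_integrable hwc _) _
  rw [circleIntegral_finset_sum _ _ hintj, Finset.mul_sum]
  refine Finset.sum_congr rfl fun j _ => ?_
  rw [circleIntegral.integral_smul]
  unfold momf
  rw [smul_eq_mul]
  ring

end WeightLayer

section KernelLayer

variable {w : ℂ → ℂ}

lemma kernel_cont {z : ℂ} (hz : ‖z‖ ≠ 1)
    (hwc : ContinuousOn w (sphere (0 : ℂ) 1)) :
    ContinuousOn (fun ζ : ℂ => (ζ + z) / (ζ - z) * w ζ / ζ) (sphere (0 : ℂ) 1) := by
  intro ζ hζ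
  have hζ0 : ζ ≠ 0 := sphere_ne_zero' hζ
  have hζz : ζ - z ≠ 0 := by
    rw [sub_ne_zero]
    intro hh
    rw [mem_sphere_zero_iff_norm, hh] at hζ
    exact hz hζ
  have h1 : ContinuousWithinAt (fun ζ : ℂ => (ζ + z) / (ζ - z)) (sphere (0 : ℂ) 1) ζ :=
    ((continuousAt_id.add continuousAt_const).div
      (continuousAt_id.sub continuousAt_const) hζz).continuousWithinAt
  exact (h1.mul (hwc ζ hζ)).div continuousWithinAt_id hζ0

lemma kernel_decomp (hwc : ContinuousOn w (sphere (0 : ℂ) 1)) (p : Polynomial ℂ)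
    {z : ℂ} (hz : ‖z‖ ≠ 1) :
    (1 / (2 * Real.pi * Complex.I)) *
      (∮ ζ in C(0, 1), (ζ + z) / (ζ - z) * w ζ * p.eval ζ / ζ)
    = om (momf w) z p + p.eval z *
        ((1 / (2 * Real.pi * Complex.I)) * ∮ ζ in C(0, 1), (ζ + z) / (ζ - z) * w ζ / ζ) := by
  set q : Polynomial ℂ := (X + C z) * Dz z p with hq
  have heq : EqOn (fun ζ : ℂ => (ζ + z) / (ζ - z) * w ζ * p.eval ζ / ζ)
      (fun ζ : ℂ => w ζ * q.eval ζ * (1 : Polynomial ℂ).eval ζ⁻¹ / ζ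
        + p.eval z • ((ζ + z) / (ζ - z) * w ζ / ζ)) (sphere (0 : ℂ) 1) := by
    intro ζ hζ
    have hζ0 : ζ ≠ 0 := sphere_ne_zero' hζ
    have hζz : ζ - z ≠ 0 := by
      rw [sub_ne_zero]
      intro hh
      rw [mem_sphere_zero_iff_norm, hh] at hζ
      exact hz hζ
    have hps : (ζ - z) * (Dz z p).eval ζ = p.eval ζ - p.eval z := by
      have := congrArg (fun r : Polynomial ℂ => r.eval ζ) (Dz_spec z p)
      simpa using this
    have hprw : Polynomial.eval ζ p = (ζ - z) * Polynomial.eval ζ (Dz z p)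
        + Polynomial.eval z p := by linear_combination -hps
    simp only [hq, Polynomial.eval_mul, Polynomial.eval_add, Polynomial.eval_X,
      Polynomial.eval_C, Polynomial.eval_one, smul_eq_mul]
    rw [hprw]
    field_simp
  rw [circleIntegral.integral_congr (by norm_num) heq]
  have hint1 : CircleIntegrable
      (fun ζ : ℂ => w ζ * q.eval ζ * (1 : Polynomial ℂ).eval ζ⁻¹ / ζ) 0 1 := by
    apply ContinuousOn.circleIntegrable (by norm_num)
    intro ζ hζ
    have hζ0 : ζ ≠ 0 := sphere_ne_zero' hζ
    have h1 : ContinuousWithinAt (fun ζ : ℂ => Polynomial.eval ζ⁻¹ (1 : Polynomial ℂ))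
        (sphere (0 : ℂ) 1) ζ := by
      simp only [Polynomial.eval_one]
      exact continuousWithinAt_const
    have h2 : ContinuousWithinAt (fun ζ : ℂ => Polynomial.eval ζ q)
        (sphere (0 : ℂ) 1) ζ := q.continuous_aeval.continuousWithinAt
    exact (((hwc ζ hζ).mul h2).mul h1).div continuousWithinAt_id hζ0
  have hint2 : CircleIntegrable
      (fun ζ : ℂ => p.eval z • ((ζ + z) / (ζ - z) * w ζ / ζ)) 0 1 :=
    circleIntegrable_smul (ContinuousOn.circleIntegrable (by norm_num)
      (kernel_cont hz hwc)) _
  rw [circleIntegral_add' hint1 hint2, circleIntegral.integral_smul]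
  rw [mul_add]
  congr 1
  · have := integralPair hwc q 1
    rw [this]
    rfl
  · rw [smul_eq_mul]
    ring

end KernelLayer


/-- bilinear residue formulae at the finite singular points `z_j`. -/
theorem bilinear_residue_formulae
    (m : ℕ) [NeZero m] (hm : 2 ≤ m) (zs : Fin m → ℂ) (hinj : Function.Injective zs)
    (hcirc : ∀ j, ‖zs j‖ ≠ 1) (hz1 : zs 0 = 0)
    (ρ : Fin m → ℂ) (hρ : ∀ j, ∀ k : ℕ, ρ j ≠ (k : ℂ))
    (w : ℂ → ℂ) (Δ₁ Δ₂ : ℝ) (hΔ₁ : Δ₁ < 1) (hΔ₂ : 1 < Δ₂)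
    (havoid : ∀ j, ¬(Δ₁ < ‖zs j‖ ∧ ‖zs j‖ < Δ₂))
    (hw : DifferentiableOn ℂ w {z : ℂ | Δ₁ < ‖z‖ ∧ ‖z‖ < Δ₂})
    (hw0 : ∀ z : ℂ, Δ₁ < ‖z‖ → ‖z‖ < Δ₂ → w z ≠ 0)
    (hode : ∀ z : ℂ, Δ₁ < ‖z‖ → ‖z‖ < Δ₂ →
      (Wpoly zs).eval z * deriv w z = 2 * (Vpoly zs ρ).eval z * w z)
    (S : BiOrthoSystem w)
    (hφ0 : ∀ n : ℕ, (S.φ (n + 1)).coeff 0 ≠ 0)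
    (hφb0 : ∀ n : ℕ, (S.φb (n + 1)).coeff 0 ≠ 0)
    (Θ Θs Ω Ωs : ℕ → Polynomial ℂ)
    (hΘ : ∀ n : ℕ, ∀ z : ℂ, ‖z‖ ≠ 1 →
      2 * ((S.φ (n + 1)).coeff 0 / S.κ n) * z ^ n * (Θ n).eval z
        = (Wpoly zs).eval z *
            (S.ε n z * (S.φ n).derivative.eval z - (S.φ n).eval z * deriv (S.ε n) z)
          + 2 * (Vpoly zs ρ).eval z * (S.φ n).eval z * S.ε n z)
    (hΘs : ∀ n : ℕ, ∀ z : ℂ, ‖z‖ ≠ 1 →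
      2 * ((S.φb (n + 1)).coeff 0 / S.κ n) * z ^ (n + 1) * (Θs n).eval z
        = (Wpoly zs).eval z *
            ((S.φs n).eval z * deriv (S.εs n) z - S.εs n z * (S.φs n).derivative.eval z)
          - 2 * (Vpoly zs ρ).eval z * (S.φs n).eval z * S.εs n z)
    (hΩ : ∀ n : ℕ, ∀ z : ℂ, ‖z‖ ≠ 1 →
      2 * ((S.φ (n + 1)).coeff 0 / S.κ n) * z ^ n * (Ω n).eval z
        = (Wpoly zs).eval z *
            (S.ε (n + 1) z * (S.φ n).derivative.eval z
              - (S.φ (n + 1)).eval z * deriv (S.ε n) z)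
          + (Vpoly zs ρ).eval z *
            ((S.φ n).eval z * S.ε (n + 1) z + S.ε n z * (S.φ (n + 1)).eval z))
    (hΩs : ∀ n : ℕ, ∀ z : ℂ, ‖z‖ ≠ 1 →
      2 * ((S.φb (n + 1)).coeff 0 / S.κ n) * z ^ (n + 1) * (Ωs n).eval z
        = (Wpoly zs).eval z *
            ((S.φs (n + 1)).eval z * deriv (S.εs n) z
              - S.εs (n + 1) z * (S.φs n).derivative.eval z)
          - (Vpoly zs ρ).eval z *
            ((S.φs n).eval z * S.εs (n + 1) z + S.εs n z * (S.φs (n + 1)).eval z))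
    (hdegΘ : ∀ n : ℕ, (Θ n).degree ≤ (m - 2 : ℕ))
    (hdegΘs : ∀ n : ℕ, (Θs n).degree ≤ (m - 2 : ℕ))
    (hdegΩ : ∀ n : ℕ, (Ω n).degree ≤ (m - 1 : ℕ))
    (hdegΩs : ∀ n : ℕ, (Ωs n).degree ≤ (m - 1 : ℕ))
    (n : ℕ) (hn : 1 ≤ n) (j : Fin m) :
    (S.φ n).eval (zs j) * S.ε n (zs j)
      = 2 * ((S.φ (n + 1)).coeff 0 / S.κ n) * zs j ^ n *
          ((Θ n).eval (zs j) / (2 * (Vpoly zs ρ).eval (zs j))) ∧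
    (S.φs n).eval (zs j) * S.εs n (zs j)
      = -2 * ((S.φb (n + 1)).coeff 0 / S.κ n) * zs j ^ (n + 1) *
          ((Θs n).eval (zs j) / (2 * (Vpoly zs ρ).eval (zs j))) ∧
    (S.φ (n + 1)).eval (zs j) * S.ε n (zs j)
      = 2 * ((S.φ (n + 1)).coeff 0 / S.κ n) * zs j ^ n *
          (((Ω n).eval (zs j) + (Vpoly zs ρ).eval (zs j)) / (2 * (Vpoly zs ρ).eval (zs j))) ∧
    (S.φ n).eval (zs j) * S.ε (n + 1) (zs j)
      = 2 * ((S.φ (n + 1)).coeff 0 / S.κ n) * zs j ^ n *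
          (((Ω n).eval (zs j) - (Vpoly zs ρ).eval (zs j)) / (2 * (Vpoly zs ρ).eval (zs j))) := by
  classical
  have hz : ‖zs j‖ ≠ 1 := hcirc j
  have hwc : ContinuousOn w (Metric.sphere (0 : ℂ) 1) := by
    refine hw.continuousOn.mono ?_
    intro x hx
    rw [mem_sphere_zero_iff_norm] at hx
    exact ⟨by rw [hx]; exact hΔ₁, by rw [hx]; exact hΔ₂⟩
  have hW0 : (Wpoly zs).eval (zs j) = 0 := by
    unfold Wpoly
    rw [Polynomial.eval_prod]
    exact Finset.prod_eq_zero (Finset.mem_univ j) (by simp)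
  have hV : (Vpoly zs ρ).eval (zs j) ≠ 0 := by
    have hVeval : (Vpoly zs ρ).eval (zs j)
        = 1 / 2 * (ρ j * ∏ k ∈ Finset.univ.erase j, (zs j - zs k)) := by
      unfold Vpoly
      rw [Polynomial.eval_mul, Polynomial.eval_C, Polynomial.eval_finset_sum]
      congr 1
      rw [Finset.sum_eq_single j]
      · rw [Polynomial.eval_mul, Polynomial.eval_C, Polynomial.eval_prod]
        congr 1
        exact Finset.prod_congr rfl fun k _ => by simp
      · intro i _ hij
        rw [Polynomial.eval_mul, Polynomial.eval_C, Polynomial.eval_prod]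
        have hjmem : j ∈ Finset.univ.erase i := Finset.mem_erase.mpr ⟨Ne.symm hij, Finset.mem_univ j⟩
        rw [Finset.prod_eq_zero hjmem (by simp : Polynomial.eval (zs j) (X - Polynomial.C (zs j)) = 0)]
        ring
      · intro hcon; exact absurd (Finset.mem_univ j) hcon
    rw [hVeval]
    have hρj : ρ j ≠ 0 := by
      have := hρ j 0; simpa using this
    have hprod : ∏ k ∈ Finset.univ.erase j, (zs j - zs k) ≠ 0 := by
      rw [Finset.prod_ne_zero_iff]
      intro k hk
      rw [sub_ne_zero]
      intro he
      exact (Finset.mem_erase.mp hk).1 (hinj he).symm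
    exact mul_ne_zero (by norm_num) (mul_ne_zero hρj hprod)
  have h2V : (2 : ℂ) * (Vpoly zs ρ).eval (zs j) ≠ 0 := mul_ne_zero two_ne_zero hV
  -- the moment system
  have hdφ : ∀ m, (S.φ m).natDegree = m :=
    fun m => Polynomial.natDegree_eq_of_degree_eq_some (S.deg_φ m)
  have hdφb : ∀ m, (S.φb m).natDegree = m :=
    fun m => Polynomial.natDegree_eq_of_degree_eq_some (S.deg_φb m)
  have hsys : MomSys (momf w) S.φ S.φb S.κ := by
    refine ⟨S.lead_ne, hdφ, hdφb, ?_, ?_, ?_⟩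
    · intro m
      show (S.φ m).coeff m = (S.φ m).leadingCoeff
      rw [Polynomial.leadingCoeff, hdφ m]
    · intro m
      show (S.φb m).coeff m = (S.φ m).leadingCoeff
      rw [S.lead_eq m, Polynomial.leadingCoeff, hdφb m]
    · intro m k
      exact (integralPair hwc (S.φ m) (S.φb k)).symm.trans (S.ortho m k)
  -- decomposition of ε at z_j
  have hdec : ∀ m : ℕ, S.ε m (zs j) = om (momf w) (zs j) (S.φ m)
      + (S.φ m).eval (zs j) * ((1 / (2 * Real.pi * Complex.I)) *
          ∮ ζ in C(0, 1), (ζ + zs j) / (ζ - zs j) * w ζ / ζ) := by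
    intro m
    exact kernel_decomp hwc (S.φ m) hz
  -- the Casoratian identity
  have hcas : (S.φ (n + 1)).eval (zs j) * S.ε n (zs j)
      - (S.φ n).eval (zs j) * S.ε (n + 1) (zs j)
      = 2 * ((S.φ (n + 1)).coeff 0 / S.κ n) * zs j ^ n := by
    rw [hdec n, hdec (n + 1)]
    have hc := hsys.casoratian (zs j) hn
    linear_combination hc
  refine ⟨?_, ?_, ?_, ?_⟩
  · -- conclusion 1
    have hT := hΘ n (zs j) hz
    rw [hW0, zero_mul, zero_add] at hT
    have hrw : 2 * ((S.φ (n + 1)).coeff 0 / S.κ n) * zs j ^ n *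
        ((Θ n).eval (zs j) / (2 * (Vpoly zs ρ).eval (zs j)))
        = (2 * ((S.φ (n + 1)).coeff 0 / S.κ n) * zs j ^ n * (Θ n).eval (zs j))
          / (2 * (Vpoly zs ρ).eval (zs j)) := by ring
    rw [hrw, eq_div_iff h2V]
    linear_combination -hT
  · -- conclusion 2
    have hT := hΘs n (zs j) hz
    rw [hW0, zero_mul, zero_sub] at hT
    have hrw : -2 * ((S.φb (n + 1)).coeff 0 / S.κ n) * zs j ^ (n + 1) *
        ((Θs n).eval (zs j) / (2 * (Vpoly zs ρ).eval (zs j)))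
        = (-2 * ((S.φb (n + 1)).coeff 0 / S.κ n) * zs j ^ (n + 1) * (Θs n).eval (zs j))
          / (2 * (Vpoly zs ρ).eval (zs j)) := by ring
    rw [hrw, eq_div_iff h2V]
    linear_combination hT
  · -- conclusion 3
    have hOm := hΩ n (zs j) hz
    rw [hW0, zero_mul, zero_add] at hOm
    have hrw : 2 * ((S.φ (n + 1)).coeff 0 / S.κ n) * zs j ^ n *
        (((Ω n).eval (zs j) + (Vpoly zs ρ).eval (zs j)) / (2 * (Vpoly zs ρ).eval (zs j)))
        = (2 * ((S.φ (n + 1)).coeff 0 / S.κ n) * zs j ^ n *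
            (((Ω n).eval (zs j) + (Vpoly zs ρ).eval (zs j))))
          / (2 * (Vpoly zs ρ).eval (zs j)) := by ring
    rw [hrw, eq_div_iff h2V]
    linear_combination (-1 : ℂ) * hOm + (Vpoly zs ρ).eval (zs j) * hcas
  · -- conclusion 4
    have hOm := hΩ n (zs j) hz
    rw [hW0, zero_mul, zero_add] at hOm
    have hrw : 2 * ((S.φ (n + 1)).coeff 0 / S.κ n) * zs j ^ n *
        (((Ω n).eval (zs j) - (Vpoly zs ρ).eval (zs j)) / (2 * (Vpoly zs ρ).eval (zs j)))
        = (2 * ((S.φ (n + 1)).coeff 0 / S.κ n) * zs j ^ n *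
            (((Ω n).eval (zs j) - (Vpoly zs ρ).eval (zs j))))
          / (2 * (Vpoly zs ρ).eval (zs j)) := by ring
    rw [hrw, eq_div_iff h2V]
    linear_combination (-1 : ℂ) * hOm - (Vpoly zs ρ).eval (zs j) * hcas
end
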